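/- arXiv:1305.1676 — 7 statements merged into one kernel-verified Lean document; each statement's English description precedes it below -/
import Mathlib

section
/- For every fixed integer k ≥ 1, the number of labelled graphs on vertex set {1,…,n} that contain a dominating set of cardinality k is asymptotically (1+o(1)) (1−2^{−k})^{−k} · C(n,k) · (1−2^{−k})^{n} · 2^{n(n−1)/2} as n → ∞. -/
open Filter Topology

/-- Cop-win positions in the Cops and Robbers game with `k` cops, cops to move:
the least set of positions `(c, r)` such that `(c, r)` is a member whenever the cops
can move (each staying or moving along an edge) to some `c'` with `c' i = r` for some `i`,
or to some `c'` such that every robber move from `r` lands in a member position. -/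
inductive CopsWinPos {V : Type*} (G : SimpleGraph V) {k : ℕ} : (Fin k → V) → V → Prop
  | capture (c : Fin k → V) (r : V) (c' : Fin k → V)
      (hmove : ∀ i, c' i = c i ∨ G.Adj (c i) (c' i))
      (hc : ∃ i, c' i = r) : CopsWinPos G c r
  | advance (c : Fin k → V) (r : V) (c' : Fin k → V)
      (hmove : ∀ i, c' i = c i ∨ G.Adj (c i) (c' i))
      (h : ∀ r', r' = r ∨ G.Adj r r' → CopsWinPos G c' r') : CopsWinPos G c r

/-- `G` is `k`-cop-win: some initial cop placement wins against every robber placement. -/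
def IsKCopWin {V : Type*} (G : SimpleGraph V) (k : ℕ) : Prop :=
  ∃ c : Fin k → V, ∀ r : V, (∃ i, c i = r) ∨ CopsWinPos G c r

/-- `G` has a dominating set of cardinality `k`. -/
def HasDomSet {V : Type*} (G : SimpleGraph V) (k : ℕ) : Prop :=
  ∃ S : Finset V, S.card = k ∧ ∀ v ∉ S, ∃ u ∈ S, G.Adj u v

/-- `δ_k(G)`: minimum over `k`-element vertex sets `S` of the number of vertices
not in `S` and not adjacent to any vertex of `S`. -/
noncomputable def deltaK {V : Type*} [Fintype V] (G : SimpleGraph V) (k : ℕ) : ℕ :=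
  sInf {m | ∃ S : Finset V, S.card = k ∧ {w : V | ∀ u ∈ S, w ≠ u ∧ ¬ G.Adj u w}.ncard = m}

/-- `b` is `(k,q)`-dangerous: there is a `k`-set `A` avoiding `b` with `|N^c(A) ∩ N(b)| ≤ 2q`. -/
def Dangerous {V : Type*} [Fintype V] (G : SimpleGraph V) (k q : ℕ) (b : V) : Prop :=
  ∃ A : Finset V, A.card = k ∧ b ∉ A ∧
    {w : V | (∀ u ∈ A, w ≠ u ∧ ¬ G.Adj u w) ∧ G.Adj b w}.ncard ≤ 2 * q


/-!
A fixed `k`-set `S` dominates a uniformly random graph on `n` vertices iff each of the `n - k`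
vertices outside `S` has a neighbour in `S`. Since the neighbourhoods in `S` of the outside
vertices are independent uniform subsets of `S`, this has probability `(1 - 2⁻ᵏ)ⁿ⁻ᵏ`, and the union
bound gives the upper estimate `C(n,k) (1 - 2⁻ᵏ)ⁿ⁻ᵏ`. For two distinct `k`-sets `S`, `T`, every
vertex outside `S ∪ T` (a set of size `m ≥ k + 1`) must see both `S` and `T`; by
inclusion–exclusion this has probability `1 - 2 · 2⁻ᵏ + 2⁻ᵐ ≤ 1 - 3 · 2⁻⁽ᵏ⁺¹⁾ < 1 - 2⁻ᵏ`.
So by Bonferroni's inequality the pairs cost at most `C(n,k)² (1 - 3 · 2⁻⁽ᵏ⁺¹⁾)ⁿ⁻²ᵏ`, which is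
exponentially small compared with the first moment.
-/

open Finset

theorem Nat.card_set (α : Type*) [Finite α] : Nat.card (Set α) = 2 ^ Nat.card α := by
  have := Fintype.ofFinite α
  simp [Nat.card_eq_fintype_card, Fintype.card_set]

namespace Set

variable {Z : Type*} [Finite Z]

theorem ncard_setOf_nonempty_add_one : {t : Set Z | t.Nonempty}.ncard + 1 = 2 ^ Nat.card Z := by
  have h : {t : Set Z | t.Nonempty} = {∅}ᶜ := by
    ext t; simp [nonempty_iff_ne_empty]
  rw [h, ← ncard_singleton (∅ : Set Z), ncard_compl_add_ncard, Nat.card_set]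

theorem ncard_setOf_inter_nonempty_and_add {a b : Set Z} (hab : a ∪ b = univ) :
    {t : Set Z | (t ∩ a).Nonempty ∧ (t ∩ b).Nonempty}.ncard + 2 ^ aᶜ.ncard + 2 ^ bᶜ.ncard =
      2 ^ Nat.card Z + 1 := by
  have hcompl : {t : Set Z | (t ∩ a).Nonempty ∧ (t ∩ b).Nonempty}ᶜ = 𝒫 aᶜ ∪ 𝒫 bᶜ := by
    ext t
    simp only [mem_compl_iff, mem_ofPred_eq, mem_union, mem_powerset_iff,
      subset_compl_iff_disjoint_right, disjoint_iff_inter_eq_empty, ← not_nonempty_iff_eq_empty]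
    tauto
  have hinter : 𝒫 aᶜ ∩ 𝒫 bᶜ = {∅} := by
    rw [← powerset_inter, ← compl_union, hab, compl_univ, powerset_empty]
  have hunion := ncard_union_add_ncard_inter (𝒫 aᶜ) (𝒫 bᶜ)
  rw [hinter, ncard_singleton, ncard_powerset, ncard_powerset, ← hcompl] at hunion
  have htotal := ncard_add_ncard_compl {t : Set Z | (t ∩ a).Nonempty ∧ (t ∩ b).Nonempty}
  rw [Nat.card_set] at htotal
  omega

theorem ncard_compl_preimage_val {s u : Set Z} (hsu : s ⊆ u) :
    (Subtype.val ⁻¹' s : Set u)ᶜ.ncard = u.ncard - s.ncard := by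
  rw [ncard_compl, ncard_preimage_of_injective_subset_range Subtype.val_injective
    (by rwa [Subtype.range_coe]), Nat.card_coe_set_eq]

end Set

theorem Finset.sum_card_le_card_biUnion_add {ι α : Type*} [DecidableEq ι] [DecidableEq α]
    (s : Finset ι) (f : ι → Finset α) :
    ∑ i ∈ s, #(f i) ≤ #(s.biUnion f) + ∑ i ∈ s, ∑ j ∈ s.erase i, #(f i ∩ f j) := by
  -- `f i` is its private part `f i \ ⋃_{j ≠ i} f j` plus its overlaps with the other `f j`;
  -- the private parts are pairwise disjoint.
  have hsplit : ∀ i ∈ s,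
      #(f i) ≤ #(f i \ (s.erase i).biUnion f) + ∑ j ∈ s.erase i, #(f i ∩ f j) := fun i _ => by
    rw [← card_sdiff_add_card_inter (f i) ((s.erase i).biUnion f), inter_biUnion]
    exact Nat.add_le_add_left card_biUnion_le _
  have hprivate : ∑ i ∈ s, #(f i \ (s.erase i).biUnion f) ≤ #(s.biUnion f) := by
    rw [← card_biUnion]
    · exact card_le_card (biUnion_mono fun i _ => sdiff_subset)
    · intro i hi j hj hij
      exact disjoint_sdiff_self_left.mono_right
        (sdiff_subset.trans (subset_biUnion_of_mem f (mem_erase.2 ⟨hij.symm, hj⟩)))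
  calc ∑ i ∈ s, #(f i)
      ≤ ∑ i ∈ s, (#(f i \ (s.erase i).biUnion f) + ∑ j ∈ s.erase i, #(f i ∩ f j)) :=
        sum_le_sum hsplit
    _ ≤ _ := by rw [sum_add_distrib]; exact Nat.add_le_add_right hprivate _

theorem three_mul_inv_two_pow_succ_lt_one {k : ℕ} (hk : 1 ≤ k) : 3 * (2⁻¹ : ℝ) ^ (k + 1) < 1 := by
  have : (2⁻¹ : ℝ) ^ (k + 1) ≤ 2⁻¹ ^ 2 := pow_le_pow_of_le_one (by norm_num) (by norm_num) (by omega)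
  linarith [show (2⁻¹ : ℝ) ^ 2 = 1 / 4 by norm_num]

namespace SimpleGraph

variable {V : Type*}

theorem range_edgeSet : Set.range (edgeSet : SimpleGraph V → Set (Sym2 V)) = 𝒫 Sym2.diagSetᶜ := by
  ext s
  refine ⟨?_, fun hs => ⟨fromEdgeSet s, ?_⟩⟩
  · rintro ⟨G, rfl⟩
    exact edgeSet_subset_compl_diagSet G
  · rw [edgeSet_fromEdgeSet, sdiff_eq_left]
    exact Set.subset_compl_iff_disjoint_right.mp hs

theorem card_eq_two_pow_choose [Fintype V] :
    Nat.card (SimpleGraph V) = 2 ^ (Fintype.card V).choose 2 := by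
  classical
  let e : SimpleGraph V ≃ Set ↥(Sym2.diagSetᶜ : Set (Sym2 V)) :=
    (Equiv.ofInjective _ edgeSet_injective).trans
      ((Equiv.setCongr range_edgeSet).trans (Equiv.Set.powerset _))
  rw [Nat.card_congr e, Nat.card_set, Nat.card_eq_fintype_card, Sym2.card_diagSet_compl]

def crossInduceEquiv (s : Set V) [DecidablePred (· ∈ s)] :
    SimpleGraph V ≃ (↥sᶜ → Set s) × SimpleGraph s × SimpleGraph ↥sᶜ where
  toFun G := (fun v => {u | G.Adj u v}, G.induce s, G.induce sᶜ)
  invFun x :=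
    { Adj a b :=
        if ha : a ∈ s then
          if hb : b ∈ s then x.2.1.Adj ⟨a, ha⟩ ⟨b, hb⟩ else ⟨a, ha⟩ ∈ x.1 ⟨b, hb⟩
        else
          if hb : b ∈ s then ⟨b, hb⟩ ∈ x.1 ⟨a, ha⟩ else x.2.2.Adj ⟨a, ha⟩ ⟨b, hb⟩
      symm := ⟨fun a b => by
        by_cases ha : a ∈ s <;> by_cases hb : b ∈ s <;> simp [ha, hb, adj_comm]⟩
      loopless := ⟨fun a => by by_cases ha : a ∈ s <;> simp [ha]⟩ }
  left_inv G := by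
    ext a b
    by_cases ha : a ∈ s <;> by_cases hb : b ∈ s <;> simp [ha, hb, adj_comm]
  right_inv x := by
    obtain ⟨f, G₁, G₂⟩ := x
    refine Prod.ext (funext fun v => Set.ext fun u => ?_) (Prod.ext ?_ ?_)
    · have hv : (v : V) ∉ s := v.2
      simp [hv]
    · ext a b; simp [a.2, b.2]
    · ext a b
      have ha : (a : V) ∉ s := a.2
      have hb : (b : V) ∉ s := b.2
      simp [ha, hb]

theorem card_forall_compl_setOf_adj [Finite V] (s : Set V) (Q : Set s → Prop) :
    (Nat.card {G : SimpleGraph V // ∀ v : ↥sᶜ, Q {u | G.Adj u v}} : ℝ) =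
      Nat.card (SimpleGraph V) * (Nat.card {t : Set s // Q t} / 2 ^ s.ncard) ^ sᶜ.ncard := by
  classical
  let e : {G : SimpleGraph V // ∀ v : ↥sᶜ, Q {u | G.Adj u v}} ≃
      (↥sᶜ → {t : Set s // Q t}) × SimpleGraph s × SimpleGraph ↥sᶜ :=
    ((crossInduceEquiv s).subtypeEquiv (q := fun x => ∀ v, Q (x.1 v)) fun _ => Iff.rfl).trans
      (Equiv.prodSubtypeFstEquivSubtypeProd.trans
        (Equiv.prodCongr (Equiv.subtypePiEquivPi (p := fun _ t => Q t)) (Equiv.refl _)))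
  rw [Nat.card_congr e, Nat.card_congr (crossInduceEquiv s)]
  simp only [Nat.card_prod, Nat.card_fun, Nat.card_set, Nat.card_coe_set_eq]
  push_cast
  rw [div_pow, ← pow_mul]
  field_simp

def IsDominatingSet (G : SimpleGraph V) (s : Set V) : Prop :=
  ∀ v ∉ s, ∃ u ∈ s, G.Adj u v

theorem isDominatingSet_iff_forall_nonempty (G : SimpleGraph V) (s : Set V) :
    G.IsDominatingSet s ↔ ∀ v : ↥sᶜ, {u : s | G.Adj u v}.Nonempty :=
  ⟨fun h v => let ⟨u, hu, huv⟩ := h v v.2; ⟨⟨u, hu⟩, huv⟩,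
    fun h v hv => let ⟨u, huv⟩ := h ⟨v, hv⟩; ⟨u, u.2, huv⟩⟩

theorem card_isDominatingSet [Finite V] (s : Set V) :
    (Nat.card {G : SimpleGraph V // G.IsDominatingSet s} : ℝ) =
      Nat.card (SimpleGraph V) * (1 - 2⁻¹ ^ s.ncard) ^ sᶜ.ncard := by
  have hrow : (Nat.card {t : Set s // t.Nonempty} : ℝ) = 2 ^ s.ncard - 1 := by
    rw [eq_sub_iff_add_eq]
    exact_mod_cast Set.ncard_setOf_nonempty_add_one
  rw [Nat.card_congr (Equiv.subtypeEquivRight (isDominatingSet_iff_forall_nonempty · s)),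
    card_forall_compl_setOf_adj, hrow, sub_div, div_self (by positivity), one_div, inv_pow]

theorem card_isDominatingSet_and_le [Finite V] (s t : Set V) :
    (Nat.card {G : SimpleGraph V // G.IsDominatingSet s ∧ G.IsDominatingSet t} : ℝ) ≤
      Nat.card (SimpleGraph V) *
        (1 - 2⁻¹ ^ s.ncard - 2⁻¹ ^ t.ncard + 2⁻¹ ^ (s ∪ t).ncard) ^ (s ∪ t)ᶜ.ncard := by
  set u := s ∪ t
  let Q : Set u → Prop := fun r =>
    (r ∩ Subtype.val ⁻¹' s).Nonempty ∧ (r ∩ Subtype.val ⁻¹' t).Nonempty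
  have hsub : ∀ G : SimpleGraph V, G.IsDominatingSet s ∧ G.IsDominatingSet t →
      ∀ v : ↥uᶜ, Q {w : u | G.Adj w v} := by
    rintro G ⟨hs, ht⟩ ⟨v, hv⟩
    simp only [u, Set.mem_compl_iff, Set.mem_union, not_or] at hv
    obtain ⟨a, ha, hav⟩ := hs v hv.1
    obtain ⟨b, hb, hbv⟩ := ht v hv.2
    exact ⟨⟨⟨a, Or.inl ha⟩, hav, ha⟩, ⟨⟨b, Or.inr hb⟩, hbv, hb⟩⟩
  have hrow : (Nat.card {r : Set u // Q r} : ℝ) / 2 ^ u.ncard =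
      1 - 2⁻¹ ^ s.ncard - 2⁻¹ ^ t.ncard + 2⁻¹ ^ u.ncard := by
    have hcount := Set.ncard_setOf_inter_nonempty_and_add (Z := u)
      (a := Subtype.val ⁻¹' s) (b := Subtype.val ⁻¹' t) (Set.eq_univ_of_forall fun w => w.2)
    rw [Set.ncard_compl_preimage_val Set.subset_union_left,
      Set.ncard_compl_preimage_val Set.subset_union_right, Nat.card_coe_set_eq] at hcount
    have hpow : ∀ a : Set V, a ⊆ u → (2 : ℝ) ^ (u.ncard - a.ncard) = 2 ^ u.ncard * 2⁻¹ ^ a.ncard :=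
      fun a ha => by rw [pow_sub₀ _ two_ne_zero (Set.ncard_le_ncard ha), inv_pow]
    have hcount' : (Nat.card {r : Set u // Q r} : ℝ) + 2 ^ (u.ncard - s.ncard) +
        2 ^ (u.ncard - t.ncard) = 2 ^ u.ncard + 1 := by
      exact_mod_cast hcount
    rw [hpow s Set.subset_union_left, hpow t Set.subset_union_right] at hcount'
    have hunit : (2⁻¹ : ℝ) ^ u.ncard * 2 ^ u.ncard = 1 := by
      rw [inv_pow, inv_mul_cancel₀ (by positivity)]
    rw [div_eq_iff (by positivity)]
    linear_combination hcount' - hunit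
  calc (Nat.card {G : SimpleGraph V // G.IsDominatingSet s ∧ G.IsDominatingSet t} : ℝ)
      ≤ Nat.card {G : SimpleGraph V // ∀ v : ↥uᶜ, Q {w : u | G.Adj w v}} := by
        exact_mod_cast Nat.card_le_card_of_injective (Subtype.map id hsub)
          (Subtype.map_injective _ Function.injective_id)
    _ = _ := by rw [card_forall_compl_setOf_adj, hrow]

section Fintype

variable [Fintype V]

theorem card_isDominatingSet_coe_finset (S : Finset V) :
    (Nat.card {G : SimpleGraph V // G.IsDominatingSet S} : ℝ) =
      Nat.card (SimpleGraph V) * (1 - 2⁻¹ ^ #S) ^ (Fintype.card V - #S) := by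
  rw [card_isDominatingSet, Set.ncard_compl, Set.ncard_coe_finset,
    Nat.card_eq_fintype_card (α := V)]

theorem card_isDominatingSet_and_le_of_ne {k : ℕ} {S T : Finset V} (hS : #S = k) (hT : #T = k)
    (hST : S ≠ T) :
    (Nat.card {G : SimpleGraph V // G.IsDominatingSet S ∧ G.IsDominatingSet T} : ℝ) ≤
      Nat.card (SimpleGraph V) * (1 - 3 * 2⁻¹ ^ (k + 1)) ^ (Fintype.card V - 2 * k) := by
  classical
  have hunion : (↑S ∪ ↑T : Set V).ncard = #(S ∪ T) := by
    rw [← Finset.coe_union, Set.ncard_coe_finset]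
  have hlt : k < #(S ∪ T) := by
    rw [← hS]
    refine card_lt_card (Finset.ssubset_iff_subset_ne.2 ⟨subset_union_left, fun h => hST ?_⟩)
    exact (eq_of_subset_of_card_le (by rw [h]; exact subset_union_right) (by rw [hS, hT])).symm
  have hle : #(S ∪ T) ≤ 2 * k := by
    have := card_union_le S T; omega
  have hhalf : (2⁻¹ : ℝ) ^ k ≤ 2⁻¹ := pow_le_of_le_one (by norm_num) (by norm_num) (by omega)
  have hbase : 0 ≤ 1 - 2 * 2⁻¹ ^ k + (2⁻¹ : ℝ) ^ #(S ∪ T) := by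
    have : (0 : ℝ) ≤ 2⁻¹ ^ #(S ∪ T) := by positivity
    linarith
  have hbase_le : 1 - 2 * 2⁻¹ ^ k + (2⁻¹ : ℝ) ^ #(S ∪ T) ≤ 1 - 3 * 2⁻¹ ^ (k + 1) := by
    have : (2⁻¹ : ℝ) ^ #(S ∪ T) ≤ 2⁻¹ ^ (k + 1) :=
      pow_le_pow_of_le_one (by norm_num) (by norm_num) hlt
    rw [pow_succ] at this ⊢
    linarith
  have hpow_pos : (0 : ℝ) < 2⁻¹ ^ (k + 1) := by positivity
  refine (card_isDominatingSet_and_le (S : Set V) T).trans ?_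
  rw [Set.ncard_coe_finset, Set.ncard_coe_finset, hS, hT, sub_sub, ← two_mul, hunion,
    Set.ncard_compl, hunion, ← Nat.card_eq_fintype_card (α := V)]
  gcongr
  calc (1 - 2 * 2⁻¹ ^ k + (2⁻¹ : ℝ) ^ #(S ∪ T)) ^ (Nat.card V - #(S ∪ T))
      ≤ (1 - 3 * 2⁻¹ ^ (k + 1)) ^ (Nat.card V - #(S ∪ T)) := by gcongr
    _ ≤ (1 - 3 * 2⁻¹ ^ (k + 1)) ^ (Nat.card V - 2 * k) :=
        pow_le_pow_of_le_one (hbase.trans hbase_le) (by linarith [hpow_pos]) (by omega)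

end Fintype

end SimpleGraph

section HasDomSet

variable {V : Type*} [Fintype V]

open Classical in
theorem card_hasDomSet_eq_card_biUnion (k : ℕ) :
    Nat.card {G : SimpleGraph V // HasDomSet G k} =
      #((powersetCard k univ).biUnion fun S : Finset V =>
        ({G | G.IsDominatingSet S} : Finset (SimpleGraph V))) := by
  rw [Nat.card_eq_fintype_card, Fintype.card_subtype]
  congr 1
  ext G
  simp only [Finset.mem_filter, Finset.mem_univ, true_and, Finset.mem_biUnion, mem_powersetCard,
    subset_univ]
  rfl

open Classical in
theorem sum_card_isDominatingSet (k : ℕ) :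
    ∑ S ∈ powersetCard k (univ : Finset V), (#{G : SimpleGraph V | G.IsDominatingSet S} : ℝ) =
      (Fintype.card V).choose k *
        (Nat.card (SimpleGraph V) * (1 - 2⁻¹ ^ k) ^ (Fintype.card V - k)) := by
  rw [sum_congr rfl fun S hS => ?_, sum_const, card_powersetCard, card_univ, nsmul_eq_mul]
  rw [← Fintype.card_subtype, ← Nat.card_eq_fintype_card,
    SimpleGraph.card_isDominatingSet_coe_finset, mem_powersetCard_univ.1 hS]

theorem card_hasDomSet_le (k : ℕ) :
    (Nat.card {G : SimpleGraph V // HasDomSet G k} : ℝ) ≤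
      (Fintype.card V).choose k *
        (Nat.card (SimpleGraph V) * (1 - 2⁻¹ ^ k) ^ (Fintype.card V - k)) := by
  classical
  rw [card_hasDomSet_eq_card_biUnion, ← sum_card_isDominatingSet]
  exact_mod_cast card_biUnion_le

theorem card_hasDomSet_ge {k : ℕ} (hk : 1 ≤ k) :
    (Fintype.card V).choose k *
        (Nat.card (SimpleGraph V) * (1 - 2⁻¹ ^ k) ^ (Fintype.card V - k)) -
      ((Fintype.card V).choose k) ^ 2 *
        (Nat.card (SimpleGraph V) * (1 - 3 * 2⁻¹ ^ (k + 1)) ^ (Fintype.card V - 2 * k)) ≤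
      (Nat.card {G : SimpleGraph V // HasDomSet G k} : ℝ) := by
  classical
  set 𝒮 := powersetCard k (univ : Finset V)
  set A : Finset V → Finset (SimpleGraph V) := fun S => {G | G.IsDominatingSet S}
  set b : ℝ := Nat.card (SimpleGraph V) * (1 - 3 * 2⁻¹ ^ (k + 1)) ^ (Fintype.card V - 2 * k)
  have hb : 0 ≤ b := by
    have := three_mul_inv_two_pow_succ_lt_one hk
    have : 0 ≤ 1 - 3 * (2⁻¹ : ℝ) ^ (k + 1) := by linarith
    positivity
  have hpairs : ∑ S ∈ 𝒮, ∑ T ∈ 𝒮.erase S, (#(A S ∩ A T) : ℝ) ≤ #𝒮 ^ 2 * b := by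
    calc _ ≤ ∑ S ∈ 𝒮, ∑ T ∈ 𝒮, b := by
          refine sum_le_sum fun S hS => ?_
          refine (sum_le_sum fun T hT => ?_).trans (sum_le_sum_of_subset_of_nonneg
            (erase_subset S 𝒮) fun _ _ _ => hb)
          obtain ⟨hTS, hT⟩ := mem_erase.1 hT
          rw [← filter_and, ← Fintype.card_subtype, ← Nat.card_eq_fintype_card]
          exact SimpleGraph.card_isDominatingSet_and_le_of_ne (mem_powersetCard_univ.1 hS)
            (mem_powersetCard_univ.1 hT) (Ne.symm hTS)
      _ = #𝒮 ^ 2 * b := by simp only [sum_const, nsmul_eq_mul]; ring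
  have hbonferroni : ∑ S ∈ 𝒮, (#(A S) : ℝ) ≤
      #(𝒮.biUnion A) + ∑ S ∈ 𝒮, ∑ T ∈ 𝒮.erase S, (#(A S ∩ A T) : ℝ) := by
    exact_mod_cast sum_card_le_card_biUnion_add 𝒮 A
  rw [card_powersetCard, card_univ] at hpairs
  rw [card_hasDomSet_eq_card_biUnion, ← sum_card_isDominatingSet]
  linarith

end HasDomSet

theorem tendsto_div_of_sub_le_of_le {N D E : ℕ → ℝ} (hD : ∀ᶠ n in atTop, 0 < D n)
    (hlow : ∀ᶠ n in atTop, D n - E n ≤ N n) (hup : ∀ᶠ n in atTop, N n ≤ D n)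
    (hE : Tendsto (fun n => E n / D n) atTop (𝓝 0)) :
    Tendsto (fun n => N n / D n) atTop (𝓝 1) := by
  refine tendsto_of_tendsto_of_tendsto_of_le_of_le' (by simpa using hE.const_sub 1)
    tendsto_const_nhds ?_ ?_
  · filter_upwards [hD, hlow] with n hDn hlown
    rw [← div_self hDn.ne', ← sub_div]
    exact div_le_div_of_nonneg_right hlown hDn.le
  · filter_upwards [hD, hup] with n hDn hupn
    exact div_le_one_of_le₀ hupn hDn.le

theorem tendsto_choose_mul_pow_div_pow {p q : ℝ} (hq : 0 < q) (hqp : q < p) (k j : ℕ) :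
    Tendsto (fun n : ℕ => n.choose k * q ^ (n - j) / p ^ (n - k)) atTop (𝓝 0) := by
  have hp : 0 < p := hq.trans hqp
  have hlim : Tendsto (fun n : ℕ => (n : ℝ) ^ k * (q / p) ^ n * (p ^ k / q ^ j)) atTop (𝓝 0) := by
    simpa using (tendsto_pow_const_mul_const_pow_of_lt_one k (div_pos hq hp).le
      ((div_lt_one hp).2 hqp)).mul_const (p ^ k / q ^ j)
  refine squeeze_zero' (Eventually.of_forall fun n => by positivity) ?_ hlim
  filter_upwards [eventually_ge_atTop (max j k)] with n hn
  rw [pow_sub₀ q hq.ne' (le_of_max_le_left hn), pow_sub₀ p hp.ne' (le_of_max_le_right hn), div_pow]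
  have hchoose : (n.choose k : ℝ) ≤ n ^ k := by exact_mod_cast Nat.choose_le_pow n k
  calc (n.choose k : ℝ) * (q ^ n * (q ^ j)⁻¹) / (p ^ n * (p ^ k)⁻¹)
      = n.choose k * (q ^ n / p ^ n * (p ^ k / q ^ j)) := by field_simp
    _ ≤ n ^ k * (q ^ n / p ^ n * (p ^ k / q ^ j)) := by gcongr
    _ = _ := by ring

theorem kDom_denominator_eq {k n : ℕ} (hk : 1 ≤ k) (hn : k ≤ n) :
    (1 - 2 ^ (-(k : ℝ))) ^ (-(k : ℝ)) * (n.choose k : ℝ) *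
        (1 - 2 ^ (-(k : ℝ))) ^ (n : ℝ) * 2 ^ (n * (n - 1) / 2) =
      n.choose k * (Nat.card (SimpleGraph (Fin n)) * (1 - 2⁻¹ ^ k) ^ (n - k)) := by
  have hp : (0 : ℝ) < 1 - 2⁻¹ ^ k := by
    linarith [pow_le_of_le_one (show (0 : ℝ) ≤ 2⁻¹ by norm_num) (by norm_num) (by omega : k ≠ 0)]
  have hrpow : (1 - 2⁻¹ ^ k : ℝ) ^ (-(k : ℝ)) * (1 - 2⁻¹ ^ k) ^ (n : ℝ) = (1 - 2⁻¹ ^ k) ^ (n - k) := by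
    rw [← Real.rpow_add hp, neg_add_eq_sub, ← Nat.cast_sub hn, Real.rpow_natCast]
  rw [Real.rpow_neg two_pos.le, Real.rpow_natCast, ← inv_pow, ← Nat.choose_two_right,
    SimpleGraph.card_eq_two_pow_choose, Fintype.card_fin, ← hrpow]
  push_cast
  ring

/-- The number of labelled graphs on `{1,…,n}` containing a dominating set of cardinality `k`
is `(1+o(1)) (1-2^{-k})^{-k} C(n,k) (1-2^{-k})^n 2^{n(n-1)/2}`. -/
theorem kDom_count_asymptotics (k : ℕ) (hk : 1 ≤ k) :
    Tendsto (fun n : ℕ =>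
      (Nat.card {G : SimpleGraph (Fin n) // HasDomSet G k} : ℝ) /
        ((1 - 2 ^ (-(k : ℝ))) ^ (-(k : ℝ)) * (n.choose k : ℝ) *
          (1 - 2 ^ (-(k : ℝ))) ^ (n : ℝ) * 2 ^ (n * (n - 1) / 2)))
      atTop (𝓝 1) := by
  set p : ℝ := 1 - 2⁻¹ ^ k
  set q : ℝ := 1 - 3 * 2⁻¹ ^ (k + 1)
  have hq : 0 < q := sub_pos.2 (three_mul_inv_two_pow_succ_lt_one hk)
  have hqp : q < p := by
    simp only [p, q, pow_succ]; linarith [pow_pos (show (0 : ℝ) < 2⁻¹ by norm_num) k]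
  have hD : ∀ n ≥ k, 0 < (n.choose k : ℝ) * (Nat.card (SimpleGraph (Fin n)) * p ^ (n - k)) :=
    fun n hn => by
      have : (0 : ℝ) < n.choose k := by exact_mod_cast Nat.choose_pos hn
      have : (0 : ℝ) < Nat.card (SimpleGraph (Fin n)) := by exact_mod_cast Nat.card_pos
      have := hq.trans hqp
      positivity
  refine (tendsto_div_of_sub_le_of_le (eventually_atTop.2 ⟨k, hD⟩)
    (.of_forall fun n => by simpa only [Fintype.card_fin] using card_hasDomSet_ge (V := Fin n) hk)
    (.of_forall fun n => by simpa only [Fintype.card_fin] using card_hasDomSet_le (V := Fin n) k)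
    ((tendsto_choose_mul_pow_div_pow hq hqp k (2 * k)).congr' ?_)).congr' ?_
  all_goals filter_upwards [eventually_ge_atTop k] with n hn
  · have := hD n hn
    field_simp
    norm_num [q]
  · rw [kDom_denominator_eq hk hn]
end

section
/- For all integers n ≥ k ≥ 1, the number of labelled graphs on vertex set {1,…,n} that contain a dominating set of cardinality k is at most C(n,k) · (1−2^{−k})^{n−k} · 2^{n(n−1)/2}. -/
open Filter Topology

/-!
Union bound over the `C(n,k)` candidate sets `S`. A graph is determined by its restrictions
to `S` and to `Sᶜ` together with the neighbourhood in `S` of each vertex of `Sᶜ`, and `S` is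
dominating exactly when all these neighbourhoods are nonempty. So at most
`2^C(k,2) · 2^C(n-k,2) · (2^k - 1)^(n-k) = (1 - 2^(-k))^(n-k) · 2^C(n,2)` graphs are dominated
by `S`, the equality being `C(n,2) = C(k,2) + C(n-k,2) + k(n-k)`.
-/

open Finset

theorem Nat.add_choose_two (a b : ℕ) :
    (a + b).choose 2 = a.choose 2 + b.choose 2 + a * b := by
  induction b with
  | zero => simp
  | succ b ih =>
    rw [← Nat.add_assoc, Nat.choose_succ_succ', ih, Nat.choose_succ_succ', Nat.choose_one_right,
      Nat.choose_one_right]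
    ring

theorem Nat.card_subtype_exists_le_sum {α ι : Type*} [Finite α] (s : Finset ι)
    (P : ι → α → Prop) : Nat.card {a // ∃ i ∈ s, P i a} ≤ ∑ i ∈ s, Nat.card {a // P i a} := by
  classical
  have := Fintype.ofFinite α
  simp_rw [Nat.card_eq_fintype_card, Fintype.card_subtype]
  calc #{a | ∃ i ∈ s, P i a} = #(s.biUnion fun i => {a | P i a}) := by congr 1; ext; simp
    _ ≤ _ := card_biUnion_le

theorem Set.card_subtype_nonempty {α : Type*} [Finite α] :
    Nat.card {s : Set α // s.Nonempty} = 2 ^ Nat.card α - 1 := by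
  classical
  have := Fintype.ofFinite α
  simp_rw [Set.nonempty_iff_ne_empty, Nat.card_eq_fintype_card, Fintype.card_subtype_compl,
    Fintype.card_set, Fintype.card_subtype_eq]

namespace SimpleGraph

variable {V : Type*}

theorem card_le_two_pow_choose_two [Finite V] :
    Nat.card (SimpleGraph V) ≤ 2 ^ (Nat.card V).choose 2 := by
  classical
  have := Fintype.ofFinite V
  have hinj : Function.Injective
      fun (G : SimpleGraph V) (e : {e : Sym2 V // ¬e.IsDiag}) => e.1 ∈ G.edgeSet := by
    intro G G' h
    rw [← edgeSet_inj]
    ext e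
    by_cases he : e.IsDiag
    · exact iff_of_false (G.not_isDiag_of_mem_edgeSet · he) (G'.not_isDiag_of_mem_edgeSet · he)
    · exact iff_of_eq (congrFun h ⟨e, he⟩)
  calc Nat.card (SimpleGraph V) ≤ _ := Nat.card_le_card_of_injective _ hinj
    _ = _ := by
      rw [Nat.card_fun, Nat.card_eq_fintype_card (α := Prop), Fintype.card_prop,
        Nat.card_eq_fintype_card, Sym2.card_subtype_not_diag, Nat.card_eq_fintype_card]

theorem eq_of_induce_eq_of_adj_iff {G G' : SimpleGraph V} {S : Set V}
    (hS : G.induce S = G'.induce S) (hSc : G.induce Sᶜ = G'.induce Sᶜ)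
    (hcross : ∀ u ∈ S, ∀ v ∉ S, G.Adj u v ↔ G'.Adj u v) : G = G' := by
  have hin {T : Set V} (h : G.induce T = G'.induce T) (u : V) (hu : u ∈ T) (v : V)
      (hv : v ∈ T) : G.Adj u v ↔ G'.Adj u v := by
    simpa using congrArg (fun H : SimpleGraph T => H.Adj ⟨u, hu⟩ ⟨v, hv⟩) h
  ext u v
  by_cases hu : u ∈ S <;> by_cases hv : v ∈ S
  · exact hin hS u hu v hv
  · exact hcross u hu v hv
  · rw [adj_comm, G'.adj_comm]
    exact hcross v hv u hu
  · exact hin hSc u hu v hv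

def IsDominating (G : SimpleGraph V) (S : Set V) : Prop :=
  ∀ v ∉ S, ∃ u ∈ S, G.Adj u v

theorem card_isDominating_le [Finite V] (S : Set V) :
    Nat.card {G : SimpleGraph V // G.IsDominating S} ≤
      2 ^ (Nat.card S).choose 2 * 2 ^ (Nat.card ↥Sᶜ).choose 2 *
        (2 ^ Nat.card S - 1) ^ Nat.card ↥Sᶜ := by
  let f : {G : SimpleGraph V // G.IsDominating S} →
      SimpleGraph S × SimpleGraph ↥Sᶜ × (↥Sᶜ → {T : Set S // T.Nonempty}) :=
    fun G => (G.1.induce S, G.1.induce Sᶜ, fun v =>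
      ⟨{u | G.1.Adj u v}, let ⟨u, hu, huv⟩ := G.2 v v.2; ⟨⟨u, hu⟩, huv⟩⟩)
  have hf : Function.Injective f := by
    rintro ⟨G, _⟩ ⟨G', _⟩ h
    simp only [f, Prod.mk.injEq] at h
    obtain ⟨hS, hSc, hcross⟩ := h
    refine Subtype.ext (eq_of_induce_eq_of_adj_iff hS hSc fun u hu v hv => ?_)
    simpa using congrArg (fun T : {T : Set S // T.Nonempty} => (⟨u, hu⟩ : S) ∈ T.1)
      (congrFun hcross ⟨v, hv⟩)
  calc _ ≤ _ := Nat.card_le_card_of_injective f hf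
    _ ≤ _ := by
      rw [Nat.card_prod, Nat.card_prod, Nat.card_fun, Set.card_subtype_nonempty, ← mul_assoc]
      gcongr <;> exact card_le_two_pow_choose_two

theorem cast_card_isDominating_le [Finite V] (S : Set V) :
    (Nat.card {G : SimpleGraph V // G.IsDominating S} : ℝ) ≤
      (1 - (2 : ℝ) ^ (-(Nat.card S : ℝ))) ^ Nat.card ↥Sᶜ * 2 ^ (Nat.card V).choose 2 := by
  have hV : Nat.card V = Nat.card S + Nat.card ↥Sᶜ := by
    classical
    rw [← Nat.card_sum, Nat.card_congr (Equiv.Set.sumCompl S)]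
  have hfactor : (1 - (2 : ℝ) ^ (-(Nat.card S : ℝ))) * 2 ^ Nat.card S = 2 ^ Nat.card S - 1 := by
    rw [Real.rpow_neg zero_le_two, Real.rpow_natCast]
    field_simp
  calc (_ : ℝ) ≤ ((2 ^ (Nat.card S).choose 2 * 2 ^ (Nat.card ↥Sᶜ).choose 2 *
        (2 ^ Nat.card S - 1) ^ Nat.card ↥Sᶜ : ℕ) : ℝ) := by exact_mod_cast card_isDominating_le S
    _ = _ := by
      rw [hV, Nat.add_choose_two]
      push_cast [Nat.one_le_two_pow]
      rw [← hfactor, mul_pow, ← pow_mul]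
      ring

end SimpleGraph

theorem hasDomSet_iff_exists_isDominating {V : Type*} [Fintype V] {G : SimpleGraph V} {k : ℕ} :
    HasDomSet G k ↔ ∃ S ∈ powersetCard k (univ : Finset V), G.IsDominating S := by
  simp [HasDomSet, SimpleGraph.IsDominating]

theorem kDom_count_upper_general (n k : ℕ) :
    (Nat.card {G : SimpleGraph (Fin n) // HasDomSet G k} : ℝ) ≤
      (n.choose k : ℝ) * (1 - 2 ^ (-(k : ℝ))) ^ (n - k) * 2 ^ (n * (n - 1) / 2) := by
  have hunion : Nat.card {G : SimpleGraph (Fin n) // HasDomSet G k} ≤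
      ∑ S ∈ powersetCard k (univ : Finset (Fin n)),
        Nat.card {G : SimpleGraph (Fin n) // G.IsDominating S} := by
    simp_rw [hasDomSet_iff_exists_isDominating]
    exact Nat.card_subtype_exists_le_sum _ _
  have hbound : ∀ S ∈ powersetCard k (univ : Finset (Fin n)),
      (Nat.card {G : SimpleGraph (Fin n) // G.IsDominating S} : ℝ) ≤
        (1 - 2 ^ (-(k : ℝ))) ^ (n - k) * 2 ^ (n * (n - 1) / 2) := by
    intro S hSk
    rw [mem_powersetCard_univ] at hSk
    convert SimpleGraph.cast_card_isDominating_le (S : Set (Fin n)) using 3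
    · simp [hSk]
    · simp [Finset.filter_not, card_univ_sdiff, hSk]
    · simp [Nat.choose_two_right]
  calc (_ : ℝ) ≤ _ := Nat.cast_le.2 hunion
    _ ≤ _ := by push_cast; exact sum_le_sum hbound
    _ = _ := by
      rw [sum_const, card_powersetCard, card_univ, Fintype.card_fin, nsmul_eq_mul, mul_assoc]

/-- Upper bound: the number of labelled graphs on `{1,…,n}` containing a dominating set of
cardinality `k` is at most `C(n,k) (1-2^{-k})^{n-k} 2^{n(n-1)/2}`. -/
theorem kDom_count_upper (n k : ℕ) (hk : 1 ≤ k) (hkn : k ≤ n) :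
    (Nat.card {G : SimpleGraph (Fin n) // HasDomSet G k} : ℝ) ≤
      (n.choose k : ℝ) * (1 - 2 ^ (-(k : ℝ))) ^ (n - k) * 2 ^ (n * (n - 1) / 2) :=
  kDom_count_upper_general n k
end

section
/- Let n ≥ 2k ≥ 2 be integers and let S and T be two distinct k-element subsets of {1,…,n}. Then the number of labelled graphs on vertex set {1,…,n} in which both S and T are dominating sets is at most (1 − (3/2)·2^{−k})^{n−2k} · 2^{n(n−1)/2}. -/
open Filter Topology

/-! Put `W = S ∪ T`. A vertex outside `W` is dominated by both `S` and `T` exactly when its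
neighbourhood in `W` meets both sets, and by inclusion–exclusion only
`2^|W| - 2 · 2^(|W|-k) + 1 ≤ (1 - (3/2) 2^(-k)) 2^|W|` subsets of `W` do so, as `|W| > k`.
A graph is determined by these neighbourhoods and by its induced subgraphs on `W` and on the
complement, so each of the `n - |W| ≥ n - 2k` vertices outside `W` costs a factor
`1 - (3/2) 2^(-k)`. -/

open Finset

section MeetingBoth

variable {α : Type*} [DecidableEq α]

def meetingBoth (S T : Finset α) : Finset (Finset α) :=
  {N ∈ (S ∪ T).powerset | (N ∩ S).Nonempty ∧ (N ∩ T).Nonempty}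

theorem card_meetingBoth_add (S T : Finset α) :
    #(meetingBoth S T) + 2 ^ #(S \ T) + 2 ^ #(T \ S) = 2 ^ #(S ∪ T) + 1 := by
  have hmiss : {N ∈ (S ∪ T).powerset | ¬((N ∩ S).Nonempty ∧ (N ∩ T).Nonempty)} =
      (T \ S).powerset ∪ (S \ T).powerset := by
    ext N
    simp only [mem_filter, mem_powerset, mem_union, not_and_or, not_nonempty_iff_eq_empty,
      subset_sdiff, ← disjoint_iff_inter_eq_empty]
    constructor
    · rintro ⟨hsub, hS | hT⟩
      · exact .inl ⟨hS.left_le_of_le_sup_left hsub, hS⟩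
      · exact .inr ⟨hT.left_le_of_le_sup_right hsub, hT⟩
    · rintro (⟨hsub, hS⟩ | ⟨hsub, hT⟩)
      · exact ⟨hsub.trans subset_union_right, .inl hS⟩
      · exact ⟨hsub.trans subset_union_left, .inr hT⟩
  have hboth : (T \ S).powerset ∩ (S \ T).powerset = {∅} := by
    ext N
    rw [mem_inter, mem_powerset, mem_powerset, ← subset_inter_iff,
      disjoint_iff_inter_eq_empty.1 disjoint_sdiff_sdiff, subset_empty, mem_singleton]
  have hsplit := card_filter_add_card_filter_not (s := (S ∪ T).powerset)
    (fun N => (N ∩ S).Nonempty ∧ (N ∩ T).Nonempty)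
  have hunion := card_union_add_card_inter (T \ S).powerset (S \ T).powerset
  rw [hmiss, card_powerset] at hsplit
  rw [hboth, card_singleton, card_powerset, card_powerset] at hunion
  rw [meetingBoth]
  omega

theorem card_meetingBoth_le {S T : Finset α} {k : ℕ} (hS : #S = k) (hT : #T = k) (hST : S ≠ T) :
    (#(meetingBoth S T) : ℝ) ≤ (1 - 3 / 2 * 2 ^ (-(k : ℝ))) * 2 ^ #(S ∪ T) := by
  have hcomm : #(S \ T) = #(T \ S) := card_sdiff_comm (hS.trans hT.symm)
  have hpos : 1 ≤ #(S \ T) := by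
    refine card_pos.2 (sdiff_nonempty.2 fun hsub => hST ?_)
    exact eq_of_subset_of_card_le hsub (by omega)
  have hunion : #(S ∪ T) = #(S \ T) + k := by rw [← card_sdiff_add_card, hT]
  have hcount : (#(meetingBoth S T) : ℝ) + 2 * 2 ^ #(S \ T) = 2 ^ #(S \ T) * 2 ^ k + 1 := by
    have := card_meetingBoth_add S T
    rw [← hcomm, hunion, pow_add] at this
    exact_mod_cast (by omega : #(meetingBoth S T) + 2 * 2 ^ #(S \ T) = _)
  have htwo : (2 : ℝ) ≤ 2 ^ #(S \ T) := le_self_pow₀ one_le_two (by omega)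
  rw [Real.rpow_neg zero_le_two, Real.rpow_natCast, hunion, pow_add]
  field_simp
  linarith

end MeetingBoth

namespace SimpleGraph

variable {V : Type*}

theorem eq_of_comap_eq_of_adj_iff {G H : SimpleGraph V} (s : Set V)
    (hs : G.comap ((↑) : s → V) = H.comap (↑))
    (hsc : G.comap ((↑) : ↥sᶜ → V) = H.comap (↑))
    (hcross : ∀ v ∉ s, ∀ w ∈ s, G.Adj v w ↔ H.Adj v w) : G = H := by
  ext a b
  by_cases ha : a ∈ s <;> by_cases hb : b ∈ s
  · exact congrArg (fun K : SimpleGraph s => K.Adj ⟨a, ha⟩ ⟨b, hb⟩) hs |>.to_iff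
  · rw [G.adj_comm, H.adj_comm]; exact hcross b hb a ha
  · exact hcross a ha b hb
  · exact congrArg (fun K : SimpleGraph ↥sᶜ => K.Adj ⟨a, ha⟩ ⟨b, hb⟩) hsc |>.to_iff

variable [DecidableEq V]

theorem adj_inter_mem_meetingBoth {G : SimpleGraph V} [DecidableRel G.Adj] {S T : Finset V}
    (hS : ∀ v ∉ S, ∃ u ∈ S, G.Adj u v) (hT : ∀ v ∉ T, ∃ u ∈ T, G.Adj u v) {v : V}
    (hv : v ∉ S ∪ T) : {w ∈ S ∪ T | G.Adj v w} ∈ meetingBoth S T := by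
  rw [notMem_union] at hv
  obtain ⟨s, hs, hsv⟩ := hS v hv.1
  obtain ⟨t, ht, htv⟩ := hT v hv.2
  simp only [meetingBoth, mem_filter, mem_powerset]
  exact ⟨filter_subset _ _, ⟨s, by simp [hs, hsv.symm]⟩, ⟨t, by simp [ht, htv.symm]⟩⟩

variable [Fintype V]

open Classical in
theorem card_mul_two_pow_le_of_forall_adj_inter_mem (W : Finset V) (𝒜 : Finset (Finset V)) :
    Nat.card {G : SimpleGraph V // ∀ v ∉ W, {w ∈ W | G.Adj v w} ∈ 𝒜} * 2 ^ (#W * #Wᶜ) ≤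
      #𝒜 ^ #Wᶜ * 2 ^ (Fintype.card V).choose 2 := by
  let f : {G : SimpleGraph V // ∀ v ∉ W, {w ∈ W | G.Adj v w} ∈ 𝒜} →
      (↥(W : Set V)ᶜ → 𝒜) × SimpleGraph W × SimpleGraph ↥(W : Set V)ᶜ := fun G =>
    (fun v => ⟨{w ∈ W | G.1.Adj v w}, G.2 v v.2⟩, G.1.comap (↑), G.1.comap (↑))
  have hf : f.Injective := by
    rintro ⟨G, hG⟩ ⟨H, hH⟩ hGH
    simp only [f, Prod.mk.injEq, funext_iff, Subtype.ext_iff] at hGH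
    obtain ⟨hcross, hW, hWc⟩ := hGH
    refine Subtype.ext (eq_of_comap_eq_of_adj_iff (W : Set V) hW hWc fun v hv w hw => ?_)
    simpa [mem_coe.1 hw] using congrArg (w ∈ ·) (hcross ⟨v, hv⟩)
  have hWc : Nat.card ↥(W : Set V)ᶜ = #Wᶜ := by
    rw [← coe_compl, Nat.card_coe_set_eq, Set.ncard_coe_finset]
  calc Nat.card {G : SimpleGraph V // ∀ v ∉ W, {w ∈ W | G.Adj v w} ∈ 𝒜} * 2 ^ (#W * #Wᶜ)
      ≤ #𝒜 ^ #Wᶜ * Nat.card (SimpleGraph W) * Nat.card (SimpleGraph ↥(W : Set V)ᶜ) *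
          2 ^ (#W * #Wᶜ) := by
        gcongr
        simpa only [Nat.card_prod, Nat.card_fun, Nat.card_eq_finsetCard, hWc, mul_assoc]
          using Nat.card_le_card_of_injective f hf
    _ ≤ #𝒜 ^ #Wᶜ * 2 ^ (#W).choose 2 * 2 ^ (#Wᶜ).choose 2 * 2 ^ (#W * #Wᶜ) := by
        gcongr
        · simpa only [Nat.card_eq_finsetCard] using card_le_two_pow_choose_two (V := W)
        · simpa only [hWc] using card_le_two_pow_choose_two (V := ↥(W : Set V)ᶜ)
    _ = #𝒜 ^ #Wᶜ * 2 ^ (Fintype.card V).choose 2 := by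
        rw [← card_add_card_compl W, Nat.add_choose_two]
        ring

theorem card_dominating_both_le {S T : Finset V} {k : ℕ} (hS : #S = k) (hT : #T = k)
    (hST : S ≠ T) :
    (Nat.card {G : SimpleGraph V //
        (∀ v ∉ S, ∃ u ∈ S, G.Adj u v) ∧ (∀ v ∉ T, ∃ u ∈ T, G.Adj u v)} : ℝ) ≤
      (1 - 3 / 2 * 2 ^ (-(k : ℝ))) ^ #(S ∪ T)ᶜ * 2 ^ (Fintype.card V).choose 2 := by
  classical
  set q : ℝ := 1 - 3 / 2 * 2 ^ (-(k : ℝ))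
  set W := S ∪ T
  have hsub := Nat.card_le_card_of_injective _ (Subtype.impEmbedding
    (fun G : SimpleGraph V => (∀ v ∉ S, ∃ u ∈ S, G.Adj u v) ∧ (∀ v ∉ T, ∃ u ∈ T, G.Adj u v))
    (fun G : SimpleGraph V => ∀ v ∉ W, {w ∈ W | G.Adj v w} ∈ meetingBoth S T)
    fun G hG _ hv => adj_inter_mem_meetingBoth hG.1 hG.2 hv).injective
  have hcount := card_mul_two_pow_le_of_forall_adj_inter_mem W (meetingBoth S T)
  have hpow : (#(meetingBoth S T) : ℝ) ^ #Wᶜ ≤ q ^ #Wᶜ * 2 ^ (#W * #Wᶜ) := by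
    rw [pow_mul, ← mul_pow]
    exact pow_le_pow_left₀ (Nat.cast_nonneg _) (card_meetingBoth_le hS hT hST) _
  refine le_of_mul_le_mul_right ?_ (by positivity : (0 : ℝ) < 2 ^ (#W * #Wᶜ))
  calc _ ≤ (Nat.card {G : SimpleGraph V // ∀ v ∉ W, {w ∈ W | G.Adj v w} ∈ meetingBoth S T} : ℝ) *
          2 ^ (#W * #Wᶜ) := by gcongr
    _ ≤ (#(meetingBoth S T) : ℝ) ^ #Wᶜ * 2 ^ (Fintype.card V).choose 2 := by exact_mod_cast hcount
    _ ≤ q ^ #Wᶜ * 2 ^ (#W * #Wᶜ) * 2 ^ (Fintype.card V).choose 2 := by gcongr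
    _ = _ := by ring

end SimpleGraph

theorem two_dom_sets_count_upper_general (n k : ℕ)
    (S T : Finset (Fin n)) (hS : S.card = k) (hT : T.card = k) (hST : S ≠ T) :
    (Nat.card {G : SimpleGraph (Fin n) //
        (∀ v ∉ S, ∃ u ∈ S, G.Adj u v) ∧ (∀ v ∉ T, ∃ u ∈ T, G.Adj u v)} : ℝ) ≤
      (1 - 3 / 2 * 2 ^ (-(k : ℝ))) ^ (n - 2 * k) * 2 ^ (n * (n - 1) / 2) := by
  set q : ℝ := 1 - 3 / 2 * 2 ^ (-(k : ℝ)) with hq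
  have hq0 : 0 ≤ q := nonneg_of_mul_nonneg_left
    ((Nat.cast_nonneg _).trans (card_meetingBoth_le hS hT hST)) (by positivity)
  have hq1 : q ≤ 1 := by
    have := Real.rpow_nonneg zero_le_two (-(k : ℝ))
    linarith
  have hexp : n - 2 * k ≤ #(S ∪ T)ᶜ := by
    have := card_union_le S T
    rw [card_compl, Fintype.card_fin]
    omega
  calc _ ≤ q ^ #(S ∪ T)ᶜ * 2 ^ (Fintype.card (Fin n)).choose 2 :=
        SimpleGraph.card_dominating_both_le hS hT hST
    _ ≤ q ^ (n - 2 * k) * 2 ^ (n * (n - 1) / 2) := by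
        rw [Fintype.card_fin, Nat.choose_two_right]
        exact mul_le_mul_of_nonneg_right (pow_le_pow_of_le_one hq0 hq1 hexp) (by positivity)

/-- For two distinct `k`-element subsets `S ≠ T` of `{1,…,n}` with `n ≥ 2k`, the number of
labelled graphs in which both `S` and `T` are dominating sets is at most
`(1 - (3/2) 2^{-k})^{n-2k} 2^{n(n-1)/2}`. -/
theorem two_dom_sets_count_upper (n k : ℕ) (hk : 1 ≤ k) (hkn : 2 * k ≤ n)
    (S T : Finset (Fin n)) (hS : S.card = k) (hT : T.card = k) (hST : S ≠ T) :
    (Nat.card {G : SimpleGraph (Fin n) //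
        (∀ v ∉ S, ∃ u ∈ S, G.Adj u v) ∧ (∀ v ∉ T, ∃ u ∈ T, G.Adj u v)} : ℝ) ≤
      (1 - 3 / 2 * 2 ^ (-(k : ℝ))) ^ (n - 2 * k) * 2 ^ (n * (n - 1) / 2) :=
  two_dom_sets_count_upper_general n k S T hS hT hST
end

section
/- For every fixed integer k ≥ 1 there exist real constants ξ > 0 and ε > 0 such that for all sufficiently large n, the number of labelled graphs G on vertex set {1,…,n} that are k-cop-win and satisfy 1 ≤ δ_k(G) ≤ ξn is at most 2^{(log₂(1−2^{−k}) − ε) n} · 2^{n(n−1)/2}. -/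
open Filter Topology

/-!
Fix a `k`-set `S` attaining `δ_k(G)` and let `U = N^c(S)`. Suppose that whenever the cops stand on
a set `B` of at most `k` vertices not containing `S`, any two vertices `b, u ∉ B` have a common
neighbour seen by no cop. Then the robber survives forever by staying unseen and within one step
of `U` (or anywhere, while the cops cover `U`): when the cops sit exactly on `S` he steps into `U`,
which `S` does not see. So a `k`-cop-win graph has a configuration `(B, b, u)` without such an
escape, and then every vertex outside `T = S ∪ U ∪ B ∪ {b, u}` is dominated by `S` and is not an
escape. The traces in `T` of the neighbourhoods of the outside vertices are independent, and each
must avoid a `2⁻ᵏ + 2⁻⁽ᵏ⁺³⁾` fraction of the subsets of `T`. As `|T| ≤ 2k + 2 + ξn`, the union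
bound over the choices of `(S, U, B, b, u)` loses only a factor `2^{O(ξ log (1/ξ)) n}`, which
is smaller than the gain for small `ξ`.
-/

open Finset

namespace SimpleGraph

variable {V : Type*} [Fintype V] (G : SimpleGraph V)

open scoped Classical in
/-- `N^c(A)` in the notation of the paper. -/
noncomputable def nonNbrs (A : Finset V) : Finset V :=
  {w | ∀ u ∈ A, w ≠ u ∧ ¬ G.Adj u w}

variable {G}

@[simp]
lemma mem_nonNbrs {A : Finset V} {w : V} :
    w ∈ G.nonNbrs A ↔ ∀ u ∈ A, w ≠ u ∧ ¬ G.Adj u w := by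
  simp [nonNbrs]

lemma nonNbrs_anti {A B : Finset V} (h : A ⊆ B) : G.nonNbrs B ⊆ G.nonNbrs A :=
  fun _ hw => mem_nonNbrs.2 fun u hu => mem_nonNbrs.1 hw u (h hu)

lemma ncard_setOf_nonNbrs (A : Finset V) :
    {w : V | ∀ u ∈ A, w ≠ u ∧ ¬ G.Adj u w}.ncard = #(G.nonNbrs A) := by
  rw [← Set.ncard_coe_finset]
  congr 1
  ext
  simp

lemma deltaK_le_card_nonNbrs {k : ℕ} {A : Finset V} (hA : #A = k) :
    deltaK G k ≤ #(G.nonNbrs A) :=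
  Nat.sInf_le ⟨A, hA, ncard_setOf_nonNbrs A⟩

lemma exists_card_nonNbrs_eq_deltaK {k : ℕ} (h : 1 ≤ deltaK G k) :
    ∃ S : Finset V, #S = k ∧ #(G.nonNbrs S) = deltaK G k := by
  have hne : {m | ∃ S : Finset V, #S = k ∧
      {w : V | ∀ u ∈ S, w ≠ u ∧ ¬ G.Adj u w}.ncard = m}.Nonempty := by
    by_contra hemp
    rw [Set.not_nonempty_iff_eq_empty] at hemp
    simp [deltaK, hemp] at h
  obtain ⟨S, hS, hcard⟩ := Nat.sInf_mem hne
  exact ⟨S, hS, (ncard_setOf_nonNbrs S).symm.trans hcard⟩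

lemma nonNbrs_nonempty_of_one_le_deltaK {k : ℕ} (h : 1 ≤ deltaK G k) {A : Finset V}
    (hA : #A = k) : (G.nonNbrs A).Nonempty :=
  card_pos.1 (h.trans (deltaK_le_card_nonNbrs hA))

end SimpleGraph

theorem CopsWinPos.not_of_invariant {V : Type*} {G : SimpleGraph V} {k : ℕ}
    (I : (Fin k → V) → V → Prop)
    (hsafe : ∀ c r, I c r → ∀ i, r ≠ c i ∧ ¬ G.Adj (c i) r)
    (hstep : ∀ c c' r, I c r → (∀ i, c' i = c i ∨ G.Adj (c i) (c' i)) →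
      ∃ r', (r' = r ∨ G.Adj r r') ∧ I c' r')
    {c : Fin k → V} {r : V} (h : CopsWinPos G c r) : ¬ I c r := by
  induction h with
  | capture c r c' hmove hc =>
    intro hI
    obtain ⟨i, rfl⟩ := hc
    rcases hmove i with h | h
    · exact (hsafe c _ hI i).1 h
    · exact (hsafe c _ hI i).2 h
  | advance c r c' hmove _ ih =>
    intro hI
    obtain ⟨r', hr', hI'⟩ := hstep c c' r hI hmove
    exact ih r' hr' hI'

namespace SimpleGraph

variable {V : Type*} [Fintype V] [DecidableEq V] {G : SimpleGraph V} {k : ℕ}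

/-- Whenever the cops stand on `B` without covering `S`, a robber at `b` can step to a vertex
that no cop sees and that is still adjacent to `u`. -/
def HasEscapes (G : SimpleGraph V) (k : ℕ) (S : Finset V) : Prop :=
  ∀ B : Finset V, #B ≤ k → (S \ B).Nonempty → ∀ b ∉ B, ∀ u ∉ B,
    ∃ w, G.Adj b w ∧ G.Adj u w ∧ w ∈ G.nonNbrs B

/-- The robber's invariant, used with `U = N^c(S)`. -/
def RobberSafe (G : SimpleGraph V) (U : Finset V) (c : Fin k → V) (r : V) : Prop :=
  r ∈ G.nonNbrs (univ.image c) ∧ ((r ∈ U ∨ ∃ u ∈ U, G.Adj r u) ∨ U ⊆ univ.image c)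

lemma RobberSafe.unseen {U : Finset V} {c : Fin k → V} {r : V} (h : G.RobberSafe U c r)
    (i : Fin k) : r ≠ c i ∧ ¬ G.Adj (c i) r :=
  mem_nonNbrs.1 h.1 (c i) (mem_image_of_mem c (mem_univ i))

variable {S : Finset V}

lemma exists_escape_of_hasEscapes (hS : #S = k) (hesc : G.HasEscapes k S) {B : Finset V}
    (hB : #B ≤ k) (hBS : B ≠ S) {r : V} (hr : r ∉ B) :
    ∃ w, G.Adj r w ∧ w ∈ G.nonNbrs B ∧
      ((∃ u ∈ G.nonNbrs S, G.Adj w u) ∨ G.nonNbrs S ⊆ B) := by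
  have hSB : (S \ B).Nonempty :=
    sdiff_nonempty.2 fun h => hBS (eq_of_subset_of_card_le h (by omega)).symm
  by_cases hUB : G.nonNbrs S ⊆ B
  · obtain ⟨w, hrw, -, hw⟩ := hesc B hB hSB r hr r hr
    exact ⟨w, hrw, hw, Or.inr hUB⟩
  · obtain ⟨u, hu, huB⟩ := not_subset.1 hUB
    obtain ⟨w, hrw, huw, hw⟩ := hesc B hB hSB r hr u huB
    exact ⟨w, hrw, hw, Or.inl ⟨u, hu, huw.symm⟩⟩

lemma RobberSafe.exists_move (hS : #S = k) (hU : (G.nonNbrs S).Nonempty)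
    (hesc : G.HasEscapes k S) {c c' : Fin k → V} {r : V} (hsafe : G.RobberSafe (G.nonNbrs S) c r)
    (hmove : ∀ i, c' i = c i ∨ G.Adj (c i) (c' i)) :
    ∃ r', (r' = r ∨ G.Adj r r') ∧ G.RobberSafe (G.nonNbrs S) c' r' := by
  have hrB : r ∉ univ.image c' := by
    simp only [mem_image, mem_univ, true_and, not_exists]
    intro i hi
    have := hsafe.unseen i
    rcases hmove i with h | h <;> simp_all
  obtain ⟨-, hnear⟩ := hsafe
  have hcard : #(univ.image c') ≤ k := card_image_le.trans (by simp)
  by_cases hBS : univ.image c' = S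
  · -- the cops now sit exactly on `S`, so every vertex of `U = N^c(S)` is safe for the robber
    have hsafeU : ∀ u ∈ G.nonNbrs S, u ∈ G.nonNbrs (univ.image c') := by
      rw [hBS]; exact fun u hu => hu
    rcases hnear with (hrU | ⟨u, hu, hru⟩) | hUc
    · exact ⟨r, Or.inl rfl, hsafeU r hrU, Or.inl (Or.inl hrU)⟩
    · exact ⟨u, Or.inr hru, hsafeU u hu, Or.inl (Or.inl hu)⟩
    · -- no cop can step from `U` into `S`
      exfalso
      obtain ⟨u, hu⟩ := hU
      obtain ⟨i, -, rfl⟩ := mem_image.1 (hUc hu)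
      have hci : c' i ∈ S := hBS ▸ mem_image_of_mem c' (mem_univ i)
      have := mem_nonNbrs.1 hu (c' i) hci
      rcases hmove i with h | h
      · exact this.1 h.symm
      · exact this.2 h.symm
  · obtain ⟨w, hrw, hw, hnear'⟩ := exists_escape_of_hasEscapes hS hesc hcard hBS hrB
    exact ⟨w, Or.inr hrw, hw, hnear'.imp_left Or.inr⟩

lemma exists_robberSafe (hδ : 1 ≤ deltaK G k) (hS : #S = k) (hesc : G.HasEscapes k S)
    (c : Fin k → V) : ∃ r, G.RobberSafe (G.nonNbrs S) c r := by
  have hcard : #(univ.image c) ≤ k := card_image_le.trans (by simp)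
  by_cases hUc : G.nonNbrs S ⊆ univ.image c
  · obtain ⟨P, hcP, hP⟩ := exists_superset_card_eq hcard (hS ▸ card_le_univ S)
    obtain ⟨r, hr⟩ := nonNbrs_nonempty_of_one_le_deltaK hδ hP
    exact ⟨r, nonNbrs_anti hcP hr, Or.inr hUc⟩
  obtain ⟨u, hu, huc⟩ := not_subset.1 hUc
  by_cases hcS : univ.image c = S
  · exact ⟨u, hcS ▸ hu, Or.inl (Or.inl hu)⟩
  · obtain ⟨w, -, hw, hnear⟩ := exists_escape_of_hasEscapes hS hesc hcard hcS huc
    exact ⟨w, hw, hnear.imp_left Or.inr⟩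

theorem not_isKCopWin_of_hasEscapes (hδ : 1 ≤ deltaK G k) (hS : #S = k)
    (hesc : G.HasEscapes k S) : ¬ IsKCopWin G k := by
  rintro ⟨c, hc⟩
  obtain ⟨r, hr⟩ := exists_robberSafe hδ hS hesc c
  have hU := nonNbrs_nonempty_of_one_le_deltaK hδ hS
  refine (hc r).elim (fun ⟨i, hi⟩ => (hr.unseen i).1 hi.symm) fun hwin => ?_
  exact CopsWinPos.not_of_invariant _ (fun _ _ h => h.unseen)
    (fun _ _ _ h hmove => h.exists_move hS hU hesc hmove) hwin hr

def Cornered (G : SimpleGraph V) (S U B : Finset V) (b u : V) : Prop :=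
  ∀ w ∉ S ∪ U ∪ B ∪ {b, u},
    (∃ s ∈ S, G.Adj s w) ∧ ¬ (G.Adj b w ∧ G.Adj u w ∧ w ∈ G.nonNbrs B)

theorem _root_.IsKCopWin.exists_cornered {G : SimpleGraph V} (hwin : IsKCopWin G k)
    (hδ : 1 ≤ deltaK G k) :
    ∃ S U B : Finset V, ∃ b u : V, #S = k ∧ #U = deltaK G k ∧ #B ≤ k ∧ (S \ B).Nonempty ∧
      b ∉ B ∧ u ∉ B ∧ G.Cornered S U B b u := by
  obtain ⟨S, hS, hU⟩ := exists_card_nonNbrs_eq_deltaK hδ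
  have hesc : ¬ G.HasEscapes k S := fun hesc => not_isKCopWin_of_hasEscapes hδ hS hesc hwin
  simp only [HasEscapes, not_forall, not_exists] at hesc
  obtain ⟨B, hB, hSB, b, hb, u, hu, hnone⟩ := hesc
  refine ⟨S, G.nonNbrs S, B, b, u, hS, hU, hB, hSB, hb, hu, fun w hw => ⟨?_, ?_⟩⟩
  · have hwS : w ∉ S := fun h => hw (by simp [h])
    have hwU : w ∉ G.nonNbrs S := fun h => hw (by simp [h])
    by_contra! h
    exact hwU (mem_nonNbrs.2 fun s hs => ⟨fun hws => hwS (hws ▸ hs), h s hs⟩)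
  · exact hnone w

end SimpleGraph

section Counting

variable {V : Type*} [Fintype V] [DecidableEq V]

def crossPairs (T : Finset V) : Finset (Sym2 V) :=
  (T ×ˢ Tᶜ).image fun p => s(p.1, p.2)

lemma card_crossPairs (T : Finset V) : #(crossPairs T) = #T * #Tᶜ := by
  rw [crossPairs, card_image_of_injOn, card_product]
  rintro ⟨a, w⟩ h ⟨a', w'⟩ h' heq
  simp only [coe_product, Set.mem_prod, mem_coe, mem_compl] at h h'
  rcases Sym2.eq_iff.1 heq with ⟨rfl, rfl⟩ | ⟨rfl, -⟩
  · rfl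
  · exact absurd h.1 h'.2

@[simp]
lemma mk_mem_crossPairs {T : Finset V} {x y : V} :
    s(x, y) ∈ crossPairs T ↔ (x ∈ T ↔ y ∉ T) := by
  simp only [crossPairs, mem_image, mem_product, mem_compl, Prod.exists, Sym2.eq_iff]
  constructor
  · rintro ⟨a, w, ⟨ha, hw⟩, ⟨rfl, rfl⟩ | ⟨rfl, rfl⟩⟩ <;> tauto
  · intro h
    by_cases hx : x ∈ T
    · exact ⟨x, y, ⟨hx, h.1 hx⟩, Or.inl ⟨rfl, rfl⟩⟩
    · exact ⟨y, x, ⟨not_not.1 (mt h.2 hx), hx⟩, Or.inr ⟨rfl, rfl⟩⟩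

lemma crossPairs_subset_not_isDiag (T : Finset V) :
    crossPairs T ⊆ univ.filter (fun e : Sym2 V => ¬ e.IsDiag) := by
  simp only [crossPairs, subset_iff, mem_image, mem_product, mem_compl, mem_filter, mem_univ,
    true_and]
  rintro _ ⟨⟨a, w⟩, ⟨ha, hw⟩, rfl⟩
  exact Sym2.mk_isDiag_iff.not.2 fun h => hw (h ▸ ha)

def sameSidePairs (T : Finset V) : Finset (Sym2 V) :=
  univ.filter (fun e : Sym2 V => ¬ e.IsDiag) \ crossPairs T

lemma card_sameSidePairs_add (T : Finset V) :
    #(sameSidePairs T) + #T * #Tᶜ = (Fintype.card V).choose 2 := by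
  have hsub := crossPairs_subset_not_isDiag T
  rw [sameSidePairs, card_sdiff_of_subset hsub, ← card_crossPairs,
    Nat.sub_add_cancel (card_le_card hsub),
    ← Sym2.card_subtype_not_diag, Fintype.card_subtype]

open scoped Classical in
lemma card_graphs_nbrPattern_mem_mul_le (T : Finset V) (𝒜 : Finset (Finset V)) :
    Nat.card {G : SimpleGraph V // ∀ w ∉ T, {t ∈ T | G.Adj w t} ∈ 𝒜} * 2 ^ (#T * #Tᶜ) ≤
      #𝒜 ^ #Tᶜ * 2 ^ (Fintype.card V).choose 2 := by
  let f : {G : SimpleGraph V // ∀ w ∉ T, {t ∈ T | G.Adj w t} ∈ 𝒜} →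
      ((Tᶜ : Finset V) → 𝒜) × (sameSidePairs T → Prop) := fun G =>
    (fun w => ⟨{t ∈ T | G.1.Adj w t}, G.2 w (mem_compl.1 w.2)⟩, fun e => e.1 ∈ G.1.edgeSet)
  have hf : Function.Injective f := by
    intro G₁ G₂ h
    simp only [f, Prod.mk.injEq, funext_iff, Subtype.mk.injEq, Finset.ext_iff, mem_filter] at h
    obtain ⟨hcross, hsame⟩ := h
    refine Subtype.ext (SimpleGraph.ext (funext₂ fun x y => propext ?_))
    by_cases hxy : x = y
    · simp [hxy]
    by_cases hside : x ∈ T ↔ y ∉ T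
    · by_cases hx : x ∈ T
      · rw [G₁.1.adj_comm, G₂.1.adj_comm]
        simpa [hx] using hcross ⟨y, mem_compl.2 (hside.1 hx)⟩ x
      · have hy : y ∈ T := not_not.1 (mt hside.2 hx)
        simpa [hy] using hcross ⟨x, mem_compl.2 hx⟩ y
    · simpa using hsame ⟨s(x, y), by simp [sameSidePairs, hxy, hside]⟩
  have hcard := Nat.card_le_card_of_injective f hf
  rw [Nat.card_prod, Nat.card_fun, Nat.card_fun, Nat.card_eq_finsetCard, Nat.card_eq_finsetCard,
    Nat.card_eq_finsetCard, Nat.card_eq_fintype_card (α := Prop), Fintype.card_prop] at hcard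
  calc _ ≤ #𝒜 ^ #Tᶜ * 2 ^ #(sameSidePairs T) * 2 ^ (#T * #Tᶜ) := Nat.mul_le_mul_right _ hcard
    _ = _ := by rw [mul_assoc, ← pow_add, card_sameSidePairs_add]

open scoped Classical in
lemma card_graphs_nbrPattern_mem_le (T : Finset V) (𝒜 : Finset (Finset V)) :
    (Nat.card {G : SimpleGraph V // ∀ w ∉ T, {t ∈ T | G.Adj w t} ∈ 𝒜} : ℝ) ≤
      (#𝒜 / 2 ^ #T) ^ #Tᶜ * 2 ^ (Fintype.card V).choose 2 := by
  rw [div_pow, ← pow_mul, div_mul_eq_mul_div, le_div_iff₀ (by positivity)]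
  exact_mod_cast card_graphs_nbrPattern_mem_mul_le T 𝒜

end Counting

section Patterns

variable {V : Type*} [DecidableEq V]

/-- The possible traces `N(w) ∩ T` of a vertex `w` outside `T` in a cornered graph. -/
def trapPatterns (T S B : Finset V) (b u : V) : Finset (Finset V) :=
  {X ∈ T.powerset | (X ∩ S).Nonempty ∧ ¬ (b ∈ X ∧ u ∈ X ∧ Disjoint X B)}

lemma card_trapPatterns_add_le {T S B : Finset V} {b u s : V} (hST : S ⊆ T) (hBT : B ⊆ T)
    (hbT : b ∈ T) (huT : u ∈ T) (hs : s ∈ S \ B) (hb : b ∉ B) (hu : u ∉ B) :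
    #(trapPatterns T S B b u) + 2 ^ (#T - #S) + 2 ^ (#T - (#B + 3)) ≤ 2 ^ #T := by
  obtain ⟨hsS, hsB⟩ := mem_sdiff.1 hs
  set E₀ : Finset V := {b, u, s}
  have hE₀T : E₀ ⊆ T := by simp [E₀, insert_subset_iff, hbT, huT, hST hsS]
  have hE₀B : Disjoint E₀ B := by simp [E₀, hb, hu, hsB]
  have hmissS : {X ∈ T.powerset | ¬ (X ∩ S).Nonempty} = (T \ S).powerset := by
    ext X
    simp [subset_sdiff, disjoint_iff_inter_eq_empty, not_nonempty_iff_eq_empty]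
  have hbad : 2 ^ (#T - (#B + 3)) ≤
      #{X ∈ T.powerset | (X ∩ S).Nonempty ∧ b ∈ X ∧ u ∈ X ∧ Disjoint X B} := by
    have hfree : ∀ Y ∈ (T \ (E₀ ∪ B)).powerset, Disjoint Y E₀ ∧ Disjoint Y B := fun Y hY => by
      have := subset_sdiff.1 (mem_powerset.1 hY)
      exact disjoint_union_right.1 this.2
    calc 2 ^ (#T - (#B + 3)) ≤ 2 ^ #(T \ (E₀ ∪ B)) := by
          refine Nat.pow_le_pow_right two_pos ?_
          rw [card_sdiff_of_subset (union_subset hE₀T hBT)]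
          have := (card_union_le E₀ B).trans (Nat.add_le_add_right (card_le_three) _)
          omega
      _ = #((T \ (E₀ ∪ B)).powerset.image (· ∪ E₀)) := by
          rw [card_image_of_injOn, card_powerset]
          intro Y₁ hY₁ Y₂ hY₂ h
          rw [← union_sdiff_cancel_right (hfree Y₁ hY₁).1,
            ← union_sdiff_cancel_right (hfree Y₂ hY₂).1]
          exact congrArg (· \ E₀) h
      _ ≤ _ := by
          refine card_le_card fun X hX => ?_
          obtain ⟨Y, hY, rfl⟩ := mem_image.1 hX
          have hYT : Y ⊆ T := (mem_powerset.1 hY).trans sdiff_subset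
          simp only [mem_filter, mem_powerset, union_subset_iff, hYT, hE₀T, true_and]
          refine ⟨⟨s, by simp [E₀, hsS]⟩, by simp [E₀], by simp [E₀], ?_⟩
          exact disjoint_union_left.2 ⟨(hfree Y hY).2, hE₀B⟩
  have h₁ := card_filter_add_card_filter_not (s := T.powerset) fun X => (X ∩ S).Nonempty
  have h₂ := card_filter_add_card_filter_not (s := {X ∈ T.powerset | (X ∩ S).Nonempty})
    fun X => b ∈ X ∧ u ∈ X ∧ Disjoint X B
  rw [filter_filter, filter_filter] at h₂
  rw [hmissS, card_powerset, card_powerset, card_sdiff_of_subset hST] at h₁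
  rw [trapPatterns]
  omega

end Patterns

/-- A vertex outside `T` is dominated by the `k`-set `S` except with probability `2⁻ᵏ`, and is an
escape for the robber with probability at least `2⁻⁽ᵏ⁺³⁾`. -/
noncomputable def patternDensity (k : ℕ) : ℝ := 1 - (2 ^ k)⁻¹ - (2 ^ (k + 3))⁻¹

lemma patternDensity_pos {k : ℕ} (hk : 1 ≤ k) : 0 < patternDensity k := by
  have h₁ : (2 : ℝ)⁻¹ ^ k ≤ 2⁻¹ := pow_le_of_le_one (by norm_num) (by norm_num) (by omega)
  have h₂ : (2 : ℝ)⁻¹ ^ (k + 3) ≤ 2⁻¹ ^ 3 :=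
    pow_le_pow_of_le_one (by norm_num) (by norm_num) (by omega)
  rw [patternDensity, ← inv_pow, ← inv_pow]
  norm_num at h₂ ⊢
  linarith

lemma patternDensity_le_one (k : ℕ) : patternDensity k ≤ 1 := by
  rw [patternDensity]
  have := inv_pos.2 (pow_pos (two_pos : (0 : ℝ) < 2) k)
  have := inv_pos.2 (pow_pos (two_pos : (0 : ℝ) < 2) (k + 3))
  linarith

lemma patternDensity_lt_one_sub_two_rpow_neg (k : ℕ) :
    patternDensity k < 1 - 2 ^ (-(k : ℝ)) := by
  rw [patternDensity, Real.rpow_neg two_pos.le, Real.rpow_natCast]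
  linarith [inv_pos.2 (pow_pos (two_pos : (0 : ℝ) < 2) (k + 3))]

lemma two_pow_div_two_pow_le (t m : ℕ) : (2 : ℝ) ^ t / 2 ^ m ≤ 2 ^ (t - m) := by
  rw [div_le_iff₀ (by positivity), ← pow_add]
  exact pow_le_pow_right₀ one_le_two (by omega)

lemma card_trapPatterns_div_le {V : Type*} [DecidableEq V] {T S B : Finset V} {b u s : V}
    (hST : S ⊆ T) (hBT : B ⊆ T) (hbT : b ∈ T) (huT : u ∈ T) (hs : s ∈ S \ B) (hb : b ∉ B)
    (hu : u ∉ B) (hBS : #B ≤ #S) :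
    (#(trapPatterns T S B b u) : ℝ) / 2 ^ #T ≤ patternDensity #S := by
  have hpat : (#(trapPatterns T S B b u) : ℝ) + 2 ^ (#T - #S) + 2 ^ (#T - (#B + 3)) ≤ 2 ^ #T := by
    exact_mod_cast card_trapPatterns_add_le hST hBT hbT huT hs hb hu
  have h₁ := two_pow_div_two_pow_le #T #S
  have h₂ := two_pow_div_two_pow_le #T (#B + 3)
  have h₃ : (2 : ℝ) ^ #T / 2 ^ (#S + 3) ≤ 2 ^ #T / 2 ^ (#B + 3) :=
    div_le_div_of_nonneg_left (by positivity) (by positivity)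
      (pow_le_pow_right₀ one_le_two (by omega))
  rw [div_le_iff₀ (by positivity), patternDensity, sub_mul, sub_mul, one_mul, ← div_eq_inv_mul,
    ← div_eq_inv_mul]
  linarith

namespace SimpleGraph

variable {V : Type*} [Fintype V] [DecidableEq V] {k : ℕ}

open scoped Classical in
lemma Cornered.nbrs_mem_trapPatterns {G : SimpleGraph V} {S U B : Finset V} {b u : V}
    (hG : G.Cornered S U B b u) {w : V} (hw : w ∉ S ∪ U ∪ B ∪ {b, u}) :
    {t ∈ S ∪ U ∪ B ∪ {b, u} | G.Adj w t} ∈ trapPatterns (S ∪ U ∪ B ∪ {b, u}) S B b u := by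
  have hBT : B ⊆ S ∪ U ∪ B ∪ {b, u} := fun x hx => by simp [hx]
  obtain ⟨⟨s, hs, hsw⟩, hnot⟩ := hG w hw
  simp only [trapPatterns, mem_filter, mem_powerset, filter_subset, true_and]
  refine ⟨⟨s, by simp [hs, hsw.symm]⟩, fun ⟨⟨_, hwb⟩, ⟨_, hwu⟩, hdisj⟩ => hnot
    ⟨hwb.symm, hwu.symm, mem_nonNbrs.2 fun x hx => ⟨fun h => hw (h ▸ hBT hx), fun hxw => ?_⟩⟩⟩
  exact Finset.disjoint_left.1 hdisj (mem_filter.2 ⟨hBT hx, hxw.symm⟩) hx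

lemma card_cornered_le {S U B : Finset V} {b u : V} (hS : #S = k) (hB : #B ≤ k)
    (hSB : (S \ B).Nonempty) (hb : b ∉ B) (hu : u ∉ B) :
    (Nat.card {G : SimpleGraph V // G.Cornered S U B b u} : ℝ) ≤
      patternDensity k ^ #(S ∪ U ∪ B ∪ {b, u})ᶜ * 2 ^ (Fintype.card V).choose 2 := by
  classical
  subst hS
  set T := S ∪ U ∪ B ∪ {b, u}
  obtain ⟨s, hs⟩ := hSB
  have hdensity := card_trapPatterns_div_le (T := T) (fun x hx => by simp [T, hx])
    (fun x hx => by simp [T, hx]) (by simp [T]) (by simp [T]) hs hb hu hB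
  have hsub : Nat.card {G : SimpleGraph V // G.Cornered S U B b u} ≤
      Nat.card {G : SimpleGraph V // ∀ w ∉ T, {t ∈ T | G.Adj w t} ∈ trapPatterns T S B b u} :=
    Nat.card_mono (Set.toFinite _) fun _ hG _ hw => Cornered.nbrs_mem_trapPatterns hG hw
  calc (Nat.card {G : SimpleGraph V // G.Cornered S U B b u} : ℝ)
      ≤ (#(trapPatterns T S B b u) / 2 ^ #T) ^ #Tᶜ * 2 ^ (Fintype.card V).choose 2 :=
        (Nat.cast_le.2 hsub).trans (card_graphs_nbrPattern_mem_le T _)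
    _ ≤ _ := by gcongr

end SimpleGraph

section UnionBound

variable {V : Type*} [Fintype V]

variable (V) in
def smallFinsets (j : ℕ) : Finset (Finset V) := {A | #A ≤ j}

lemma card_smallFinsets_mul_pow_le (j : ℕ) {x : ℝ} (hx₀ : 0 ≤ x) (hx₁ : x ≤ 1) :
    #(smallFinsets V j) * x ^ j ≤ (1 + x) ^ Fintype.card V := by
  rw [add_comm, ← Fintype.sum_pow_mul_eq_add_pow, ← nsmul_eq_mul, ← sum_const]
  simp only [one_pow, mul_one]
  calc ∑ _ ∈ smallFinsets V j, x ^ j ≤ ∑ A ∈ smallFinsets V j, x ^ #A :=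
        sum_le_sum fun A hA => pow_le_pow_of_le_one hx₀ hx₁ (mem_filter.1 hA).2
    _ ≤ ∑ A, x ^ #A := sum_le_sum_of_subset_of_nonneg (subset_univ _) fun _ _ _ => by positivity

variable [DecidableEq V] {k : ℕ}

lemma pow_card_compl_le {β : ℝ} (hβ₀ : 0 < β) (hβ₁ : β ≤ 1) {T : Finset V} {m : ℕ}
    (hT : #T ≤ m) : β ^ #Tᶜ ≤ β ^ Fintype.card V / β ^ m := by
  rw [card_compl, pow_sub₀ _ hβ₀.ne' (card_le_univ T), div_eq_mul_inv]
  exact mul_le_mul_of_nonneg_left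
    (inv_anti₀ (pow_pos hβ₀ _) (pow_le_pow_of_le_one hβ₀.le hβ₁ hT)) (by positivity)

lemma card_isKCopWin_deltaK_le_smallFinsets (hk : 1 ≤ k) (j : ℕ) :
    (Nat.card {G : SimpleGraph V // IsKCopWin G k ∧ 1 ≤ deltaK G k ∧ deltaK G k ≤ j} : ℝ) ≤
      #(smallFinsets V k) ^ 2 * #(smallFinsets V j) * Fintype.card V ^ 2 *
        (patternDensity k ^ Fintype.card V / patternDensity k ^ (2 * k + 2 + j)) *
          2 ^ (Fintype.card V).choose 2 := by
  classical
  set n := Fintype.card V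
  set β := patternDensity k
  let W : Finset (Finset V × Finset V × Finset V × V × V) :=
    {w ∈ smallFinsets V k ×ˢ smallFinsets V j ×ˢ smallFinsets V k ×ˢ univ ×ˢ univ |
      #w.1 = k ∧ (w.1 \ w.2.2.1).Nonempty ∧ w.2.2.2.1 ∉ w.2.2.1 ∧ w.2.2.2.2 ∉ w.2.2.1}
  let cornered (w : Finset V × Finset V × Finset V × V × V) : Finset (SimpleGraph V) :=
    {G | G.Cornered w.1 w.2.1 w.2.2.1 w.2.2.2.1 w.2.2.2.2}
  have hcover : ({G | IsKCopWin G k ∧ 1 ≤ deltaK G k ∧ deltaK G k ≤ j} : Finset _) ⊆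
      W.biUnion cornered := by
    intro G hG
    obtain ⟨hwin, hδ, hδj⟩ := (mem_filter.1 hG).2
    obtain ⟨S, U, B, b, u, hS, hU, hB, hSB, hb, hu, hG⟩ := hwin.exists_cornered hδ
    refine mem_biUnion.2 ⟨(S, U, B, b, u), ?_, by simpa [cornered] using hG⟩
    simp [W, smallFinsets, hS, hU, hB, hSB, hb, hu, hδj]
  have hW : #W ≤ #(smallFinsets V k) ^ 2 * #(smallFinsets V j) * n ^ 2 := by
    refine (card_filter_le _ _).trans (le_of_eq ?_)
    simp only [card_product, card_univ]
    ring
  have hevent : ∀ w ∈ W, (#(cornered w) : ℝ) ≤ β ^ n / β ^ (2 * k + 2 + j) * 2 ^ n.choose 2 := by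
    rintro ⟨S, U, B, b, u⟩ hw
    simp only [W, smallFinsets, mem_filter, mem_product, mem_univ, and_true, true_and] at hw
    obtain ⟨⟨-, hU, hB⟩, hS, hSB, hb, hu⟩ := hw
    have hT : #(S ∪ U ∪ B ∪ {b, u}) ≤ 2 * k + 2 + j := by
      have := card_union_le (S ∪ U ∪ B) {b, u}
      have := card_union_le (S ∪ U) B
      have := card_union_le S U
      have : #({b, u} : Finset V) ≤ 2 := card_le_two
      omega
    rw [← Fintype.card_subtype, ← Nat.card_eq_fintype_card]
    exact (SimpleGraph.card_cornered_le hS hB hSB hb hu).trans (mul_le_mul_of_nonneg_right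
      (pow_card_compl_le (patternDensity_pos hk) (patternDensity_le_one k) hT) (by positivity))
  have hβ := (patternDensity_pos hk).le
  calc (Nat.card {G : SimpleGraph V // IsKCopWin G k ∧ 1 ≤ deltaK G k ∧ deltaK G k ≤ j} : ℝ)
      ≤ #(W.biUnion cornered) := by
        rw [Nat.card_eq_fintype_card, Fintype.card_subtype]
        exact_mod_cast card_le_card hcover
    _ ≤ ∑ w ∈ W, (#(cornered w) : ℝ) := by exact_mod_cast card_biUnion_le
    _ ≤ #W * (β ^ n / β ^ (2 * k + 2 + j) * 2 ^ n.choose 2) := by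
        simpa using sum_le_card_nsmul _ _ _ hevent
    _ ≤ _ := by
        rw [← mul_assoc]
        gcongr
        exact_mod_cast hW

end UnionBound

section Asymptotics

open Real

/-- The exponential rate of the final bound: `(1 + ξ)ⁿ / ξʲ` bounds the number of sets of size
at most `j` (chosen three times, for `S`, `U` and `B`), and `exp (negMulLog ξ - ξ log β) ^ n`
equals `(ξβ)^{-ξn}`, which absorbs the loss `(ξβ)^{-|U|}` for `|U| ≤ ξn`. -/
noncomputable def growthRate (k : ℕ) (ξ : ℝ) : ℝ :=
  (1 + ξ) ^ 3 * patternDensity k * exp (negMulLog ξ - ξ * log (patternDensity k))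

lemma exists_growthRate_lt (k : ℕ) {γ : ℝ} (hγ : patternDensity k < γ) :
    ∃ ξ : ℝ, 0 < ξ ∧ ξ ≤ 1 ∧ growthRate k ξ < γ := by
  have hcont : Continuous (growthRate k) := by unfold growthRate; fun_prop
  have hzero : growthRate k 0 = patternDensity k := by simp [growthRate]
  have hev : ∀ᶠ ξ in 𝓝 0, growthRate k ξ < γ :=
    hcont.continuousAt.eventually_lt continuousAt_const (hzero ▸ hγ)
  obtain ⟨ξ, hξ, hξ'⟩ := ((hev.filter_mono nhdsWithin_le_nhds).and (Ioc_mem_nhdsGT one_pos)).exists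
  exact ⟨ξ, hξ'.1, hξ'.2, hξ⟩

lemma inv_pow_le_exp {y z : ℝ} (hy₀ : 0 < y) (hy₁ : y ≤ 1) {j : ℕ} (hj : (j : ℝ) ≤ z) :
    (y ^ j)⁻¹ ≤ exp (-(z * log y)) := by
  rw [← exp_log hy₀, ← exp_nat_mul, ← exp_neg, log_exp]
  exact exp_le_exp.2 (neg_le_neg (mul_le_mul_of_nonpos_right hj (log_nonpos hy₀.le hy₁)))

lemma growthRate_nonneg {k : ℕ} (hβ : 0 ≤ patternDensity k) {ξ : ℝ} (hξ : 0 ≤ ξ) :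
    0 ≤ growthRate k ξ := by
  unfold growthRate
  positivity

lemma eventually_mul_pow_le_pow (C : ℝ) (d : ℕ) {ρ : ℝ} (hρ : 1 < ρ) :
    ∀ᶠ n : ℕ in atTop, C * (n : ℝ) ^ d ≤ ρ ^ n := by
  obtain ⟨c, hc, hC⟩ : ∃ c : ℝ, 0 < c ∧ C ≤ c⁻¹ := ⟨(max C 1)⁻¹, by positivity, by simp⟩
  filter_upwards [(isLittleO_pow_const_const_pow_of_one_lt (R := ℝ) d hρ).bound hc] with n hn
  rw [norm_of_nonneg (by positivity), norm_of_nonneg (by positivity)] at hn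
  calc C * (n : ℝ) ^ d ≤ c⁻¹ * (c * ρ ^ n) := by gcongr
    _ = ρ ^ n := by field_simp

lemma exists_two_rpow_logb_sub_eq {α β : ℝ} (hβ : 0 < β) (hβα : β < α) :
    ∃ ε : ℝ, 0 < ε ∧ (2 : ℝ) ^ (logb 2 α - ε) = 2 ^ ε * (β * 2 ^ ε) := by
  -- `2 ^ (3ε) = α / β`
  set ε := logb 2 (α / β) / 3
  have hρ₀ : (0 : ℝ) < 2 ^ ε := by positivity
  have hρ3 : ((2 : ℝ) ^ ε) ^ 3 = α / β := by
    rw [← rpow_mul_natCast two_pos.le, Nat.cast_ofNat, div_mul_cancel₀ _ three_ne_zero,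
      rpow_logb two_pos one_lt_two.ne' (div_pos (hβ.trans hβα) hβ)]
  refine ⟨ε, div_pos (logb_pos one_lt_two ((one_lt_div hβ).2 hβα)) three_pos, ?_⟩
  rw [rpow_sub two_pos, rpow_logb two_pos one_lt_two.ne' (hβ.trans hβα),
    (div_eq_iff hβ.ne').1 hρ3.symm]
  field_simp

end Asymptotics

open Real in
lemma card_isKCopWin_deltaK_le_growthRate {V : Type*} [Fintype V] [DecidableEq V] {k : ℕ}
    (hk : 1 ≤ k) {ξ : ℝ} (hξ₀ : 0 < ξ) (hξ₁ : ξ ≤ 1) :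
    (Nat.card {G : SimpleGraph V //
        IsKCopWin G k ∧ 1 ≤ deltaK G k ∧ (deltaK G k : ℝ) ≤ ξ * Fintype.card V} : ℝ) ≤
      (ξ ^ (2 * k) * patternDensity k ^ (2 * k + 2))⁻¹ * Fintype.card V ^ 2 *
        growthRate k ξ ^ Fintype.card V * 2 ^ (Fintype.card V).choose 2 := by
  set n := Fintype.card V
  set β := patternDensity k
  have hβ₀ : 0 < β := patternDensity_pos hk
  set j := ⌊ξ * n⌋₊
  have hsub : Nat.card {G : SimpleGraph V //
      IsKCopWin G k ∧ 1 ≤ deltaK G k ∧ (deltaK G k : ℝ) ≤ ξ * n} ≤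
      Nat.card {G : SimpleGraph V // IsKCopWin G k ∧ 1 ≤ deltaK G k ∧ deltaK G k ≤ j} :=
    Nat.card_mono (Set.toFinite _) fun G ⟨hwin, hδ, hδξ⟩ => ⟨hwin, hδ, Nat.le_floor hδξ⟩
  have hsmall : ∀ i, (#(smallFinsets V i) : ℝ) ≤ (1 + ξ) ^ n / ξ ^ i := fun i =>
    (le_div_iff₀ (by positivity)).2 (card_smallFinsets_mul_pow_le i hξ₀.le hξ₁)
  have hU : ((ξ * β) ^ j)⁻¹ ≤ exp (negMulLog ξ - ξ * log β) ^ n := by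
    refine (inv_pow_le_exp (by positivity) (mul_le_one₀ hξ₁ hβ₀.le (patternDensity_le_one k))
      (Nat.floor_le (by positivity))).trans_eq ?_
    rw [← exp_nat_mul, log_mul hξ₀.ne' hβ₀.ne', negMulLog]
    ring_nf
  calc _ ≤ (#(smallFinsets V k) ^ 2 * #(smallFinsets V j) * n ^ 2 *
        (β ^ n / β ^ (2 * k + 2 + j)) * 2 ^ n.choose 2 : ℝ) :=
        (Nat.cast_le.2 hsub).trans (card_isKCopWin_deltaK_le_smallFinsets hk j)
    _ ≤ ((1 + ξ) ^ n / ξ ^ k) ^ 2 * ((1 + ξ) ^ n / ξ ^ j) * n ^ 2 *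
        (β ^ n / β ^ (2 * k + 2 + j)) * 2 ^ n.choose 2 := by
        gcongr
        exacts [hsmall k, hsmall j]
    _ = (ξ ^ (2 * k) * β ^ (2 * k + 2))⁻¹ * n ^ 2 * ((1 + ξ) ^ 3 * β) ^ n *
        ((ξ * β) ^ j)⁻¹ * 2 ^ n.choose 2 := by
        rw [mul_pow, ← pow_mul]
        field_simp
        ring
    _ ≤ (ξ ^ (2 * k) * β ^ (2 * k + 2))⁻¹ * n ^ 2 * ((1 + ξ) ^ 3 * β) ^ n *
        exp (negMulLog ξ - ξ * log β) ^ n * 2 ^ n.choose 2 := by gcongr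
    _ = _ := by rw [growthRate, mul_pow _ (exp _), ← mul_assoc]

/-- Theorem (a): there are `ξ, ε > 0` such that for all large `n`, the number of labelled
`k`-cop-win graphs on `{1,…,n}` with `1 ≤ δ_k ≤ ξn` is at most
`2^{(log₂(1-2^{-k}) - ε) n} · 2^{n(n-1)/2}`. -/
theorem kCopWin_small_deltaK_count (k : ℕ) (hk : 1 ≤ k) :
    ∃ ξ ε : ℝ, 0 < ξ ∧ 0 < ε ∧
      ∀ᶠ n : ℕ in atTop,
        (Nat.card {G : SimpleGraph (Fin n) //
            IsKCopWin G k ∧ 1 ≤ deltaK G k ∧ (deltaK G k : ℝ) ≤ ξ * n} : ℝ) ≤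
          2 ^ ((Real.logb 2 (1 - 2 ^ (-(k : ℝ))) - ε) * n) * 2 ^ (n * (n - 1) / 2) := by
  set β := patternDensity k
  obtain ⟨ε, hε, hαβ⟩ := exists_two_rpow_logb_sub_eq (patternDensity_pos hk)
    (patternDensity_lt_one_sub_two_rpow_neg k)
  have hρ : (1 : ℝ) < 2 ^ ε := Real.one_lt_rpow one_lt_two hε
  obtain ⟨ξ, hξ₀, hξ₁, hξ⟩ :=
    exists_growthRate_lt k (lt_mul_of_one_lt_right (patternDensity_pos hk) hρ)
  refine ⟨ξ, ε, hξ₀, hε, ?_⟩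
  filter_upwards [eventually_mul_pow_le_pow (ξ ^ (2 * k) * β ^ (2 * k + 2))⁻¹ 2 hρ] with n hn
  have hcount := card_isKCopWin_deltaK_le_growthRate (V := Fin n) hk hξ₀ hξ₁
  rw [Fintype.card_fin] at hcount
  have := growthRate_nonneg (patternDensity_pos hk).le hξ₀.le
  calc _ ≤ (ξ ^ (2 * k) * β ^ (2 * k + 2))⁻¹ * n ^ 2 * growthRate k ξ ^ n * 2 ^ n.choose 2 := hcount
    _ ≤ (2 ^ ε) ^ n * (β * 2 ^ ε) ^ n * 2 ^ n.choose 2 := by gcongr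
    _ = _ := by rw [← mul_pow, ← hαβ, ← Real.rpow_mul_natCast two_pos.le, Nat.choose_two_right]
end

section
/- For every fixed integer k ≥ 1 and every real ξ > 0 there exists ε > 0 such that for all sufficiently large n, the number of labelled graphs G on vertex set {1,…,n} that are k-cop-win and satisfy δ_k(G) > ξn is at most 2^{(log₂(1−2^{−k}) − ε) n} · 2^{n(n−1)/2}. -/
open Filter Topology

/-!
If a `k`-cop-win graph had no *trap* outside a small set `B` (a robber vertex `b` and a cop
set `A` such that every undominated vertex the robber can reach from `b` lies in `B`), the
robber could evade forever outside `B`. So when `δ_k` is large, extracting traps outside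
everything used so far and thinning greedily yields `ℓ` traps `(b i, A i)` relative to one set
`B` of size `ℓ (k + 1)²`, with distinct `b i` lying outside every `A j`. Each `b i` then has
no neighbour among the more than `δ_k - |B|` vertices outside `B` undominated by `A i`, and
adding any subset of these missing edges is injective: a fixed choice of `(B, b, A)` accounts
for at most a `2 ^ (-ℓ (δ_k - |B|))` fraction of all graphs, while there are only polynomially
many choices. Taking `ℓ ξ` large beats every exponential `2 ^ (-C n)`.
-/

namespace CopsAndRobbers

open Finset
open scoped Classical

variable {V : Type*} {k : ℕ}

lemma exists_card_eq_forall_mem (c : Fin k → V) {t : Finset V} (hc : ∀ i, c i ∈ t)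
    (hk : k ≤ #t) : ∃ A ⊆ t, #A = k ∧ ∀ i, c i ∈ A := by
  obtain ⟨A, hcA, hAt, hA⟩ := exists_subsuperset_card_eq (s := univ.image c)
    (by simpa [subset_iff] using hc) (card_image_le.trans (by simp)) hk
  exact ⟨A, hAt, hA, fun i => hcA (mem_image_of_mem c (mem_univ i))⟩

noncomputable def trapSupport (l : List (V × Finset V)) : Finset V :=
  l.toFinset.biUnion fun p => insert p.1 p.2

lemma mem_trapSupport {l : List (V × Finset V)} {x : V} :
    x ∈ trapSupport l ↔ ∃ p ∈ l, x = p.1 ∨ x ∈ p.2 := by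
  simp [trapSupport]

lemma card_trapSupport_le {l : List (V × Finset V)} (hl : ∀ p ∈ l, #p.2 ≤ k) :
    #(trapSupport l) ≤ l.length * (k + 1) :=
  (card_biUnion_le_card_mul _ _ _ fun p hp =>
      (card_insert_le _ _).trans (Nat.succ_le_succ (hl p (List.mem_toFinset.1 hp)))).trans
    (Nat.mul_le_mul_right _ (List.toFinset_card_le l))

lemma length_filter_mem_le {l : List (V × Finset V)} (hl : (l.map Prod.fst).Nodup)
    (A : Finset V) : (l.filter fun q => q.1 ∈ A).length ≤ #A := by
  have hnd : ((l.filter fun q => q.1 ∈ A).map Prod.fst).Nodup :=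
    hl.sublist (List.filter_sublist.map _)
  rw [← List.length_map Prod.fst, ← List.toFinset_card_of_nodup hnd]
  exact card_le_card fun x hx => by
    obtain ⟨q, hq, rfl⟩ := List.mem_map.1 (List.mem_toFinset.1 hx)
    simpa using (List.mem_filter.1 hq).2

/-- Greedy selection: keep the head and discard the entries whose first component it covers;
each kept entry discards at most `k` others. -/
theorem exists_sublist_pairwise_notMem : ∀ (l : List (V × Finset V)),
    (l.map Prod.fst).Nodup → (∀ p ∈ l, #p.2 ≤ k) → ∃ l' : List (V × Finset V),
      l'.Sublist l ∧ l.length ≤ l'.length * (k + 1) ∧ l'.Pairwise fun p q => q.1 ∉ p.2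
  | [], _, _ => ⟨[], List.Sublist.slnil, by simp, List.Pairwise.nil⟩
  | p :: t, hl, hk => by
    have ht : (t.map Prod.fst).Nodup := (List.nodup_cons.1 hl).2
    obtain ⟨l', hsub, hlen, hpw⟩ := exists_sublist_pairwise_notMem (t.filter fun q => q.1 ∉ p.2)
      (ht.sublist (List.filter_sublist.map _))
      (fun q hq => hk q (List.mem_cons_of_mem p (List.mem_of_mem_filter hq)))
    have hdrop : t.length ≤ (t.filter fun q => q.1 ∉ p.2).length + k := by
      have := List.length_eq_length_filter_add (l := t) fun q => decide (q.1 ∉ p.2)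
      have := length_filter_mem_le ht p.2
      have := hk p List.mem_cons_self
      simp_all only [decide_not, Bool.not_not]
      omega
    refine ⟨p :: l', (hsub.trans List.filter_sublist).cons_cons p, ?_,
      List.Pairwise.cons (fun q hq => ?_) hpw⟩
    · simp only [List.length_cons]
      nlinarith
    · simpa using (List.mem_filter.1 (hsub.subset hq)).2
termination_by l => l.length
decreasing_by exact Nat.lt_succ_of_le (List.length_filter_le _ _)

lemma pairwise_rel_getElem_of_ne {α : Type*} {R : α → α → Prop} (hR : ∀ a b, R a b → R b a)
    {l : List α} (h : l.Pairwise R) {i j : ℕ} (hi : i < l.length) (hj : j < l.length)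
    (hij : i ≠ j) : R l[i] l[j] := by
  rcases hij.lt_or_gt with hlt | hlt
  · exact List.pairwise_iff_getElem.1 h i j hi hj hlt
  · exact hR _ _ (List.pairwise_iff_getElem.1 h j i hj hi hlt)

lemma card_mul_le_of_subset_biUnion {α β : Type*} {s : Finset α} {D : Finset β}
    {t : β → Finset α} {c m : ℕ} (h : s ⊆ D.biUnion t) (ht : ∀ d ∈ D, #(t d) * c ≤ m) :
    #s * c ≤ #D * m :=
  calc #s * c ≤ (∑ d ∈ D, #(t d)) * c :=
        Nat.mul_le_mul_right _ ((card_le_card h).trans card_biUnion_le)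
    _ = ∑ d ∈ D, #(t d) * c := sum_mul _ _ _
    _ ≤ #D * m := by simpa using sum_le_card_nsmul D _ m ht

section Game

variable [Fintype V] {G : SimpleGraph V}

noncomputable def nonNeighborFinset (G : SimpleGraph V) (A : Finset V) : Finset V :=
  univ.filter fun w => ∀ u ∈ A, w ≠ u ∧ ¬ G.Adj u w

@[simp]
lemma mem_nonNeighborFinset {A : Finset V} {w : V} :
    w ∈ nonNeighborFinset G A ↔ ∀ u ∈ A, w ≠ u ∧ ¬ G.Adj u w := by
  simp [nonNeighborFinset]

lemma deltaK_le_card_nonNeighborFinset {A : Finset V} (hA : #A = k) :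
    deltaK G k ≤ #(nonNeighborFinset G A) :=
  Nat.sInf_le ⟨A, hA, by rw [← Set.ncard_coe_finset]; congr; ext; simp⟩

/-- With the robber on `b` and the cops on `A`, every vertex the robber can reach without
stepping next to a cop lies in `B`. -/
def IsTrap (G : SimpleGraph V) (k : ℕ) (B : Finset V) (b : V) (A : Finset V) : Prop :=
  #A = k ∧ b ∉ A ∧ ∀ w ∈ nonNeighborFinset G A, (w = b ∨ G.Adj b w) → w ∈ B

lemma IsTrap.mono {B B' : Finset V} {b : V} {A : Finset V} (h : IsTrap G k B b A) (hB : B ⊆ B') :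
    IsTrap G k B' b A :=
  ⟨h.1, h.2.1, fun w hw hbw => hB (h.2.2 w hw hbw)⟩

/-- Without a trap outside `B`, the robber always has a move keeping him outside `B` and
undominated by the cops' new positions. -/
lemma not_copsWinPos_of_forall_not_isTrap {B : Finset V} (hk : k < Fintype.card V)
    (hB : ∀ b ∉ B, ∀ A, ¬ IsTrap G k B b A) {c : Fin k → V} {r : V}
    (hpos : CopsWinPos G c r) (hrB : r ∉ B) (hr : ∀ i, r ≠ c i ∧ ¬ G.Adj (c i) r) : False := by
  induction hpos with
  | capture c r c' hmove hcap =>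
    obtain ⟨i, rfl⟩ := hcap
    rcases hmove i with h | h
    · exact (hr i).1 h
    · exact (hr i).2 h
  | advance c r c' hmove _ ih =>
    have hc' : ∀ i, c' i ∈ univ.erase r := fun i => by
      refine mem_erase.2 ⟨fun h => ?_, mem_univ _⟩
      rcases hmove i with h' | h'
      · exact (hr i).1 (h ▸ h')
      · exact (hr i).2 (h ▸ h')
    obtain ⟨A, hAr, hA, hcA⟩ := exists_card_eq_forall_mem c' hc'
      (by rw [card_erase_of_mem (mem_univ r), card_univ]; omega)
    have hrA : r ∉ A := fun h => by simpa using hAr h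
    obtain ⟨w, hw, hrw, hwB⟩ : ∃ w ∈ nonNeighborFinset G A, (w = r ∨ G.Adj r w) ∧ w ∉ B := by
      by_contra! h
      exact hB r hrB A ⟨hA, hrA, h⟩
    exact ih w hrw hwB fun i => mem_nonNeighborFinset.1 hw (c' i) (hcA i)

theorem exists_isTrap (hwin : IsKCopWin G k) (hk : k < Fintype.card V) {B : Finset V}
    (hB : #B < deltaK G k) : ∃ b ∉ B, ∃ A, IsTrap G k B b A := by
  by_contra! htrap
  obtain ⟨c, hc⟩ := hwin
  obtain ⟨A, -, hA, hcA⟩ := exists_card_eq_forall_mem c (fun i => mem_univ (c i))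
    (by rw [card_univ]; omega)
  obtain ⟨r, hr, hrB⟩ := exists_mem_notMem_of_card_lt_card
    (hB.trans_le (deltaK_le_card_nonNeighborFinset (G := G) hA))
  have hsafe : ∀ i, r ≠ c i ∧ ¬ G.Adj (c i) r := fun i => mem_nonNeighborFinset.1 hr (c i) (hcA i)
  rcases hc r with ⟨i, hi⟩ | hpos
  · exact (hsafe i).1 hi.symm
  · exact not_copsWinPos_of_forall_not_isTrap hk htrap hpos hrB hsafe

def IsTrapChain (G : SimpleGraph V) (k : ℕ) : List (V × Finset V) → Prop
  | [] => True
  | p :: l => IsTrapChain G k l ∧ p.1 ∉ trapSupport l ∧ IsTrap G k (trapSupport l) p.1 p.2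

lemma IsTrapChain.isTrap : ∀ {l : List (V × Finset V)}, IsTrapChain G k l →
    ∀ p ∈ l, IsTrap G k (trapSupport l) p.1 p.2
  | q :: l, ⟨hl, _, hq⟩, p, hp => by
    have hsub : trapSupport l ⊆ trapSupport (q :: l) := fun x hx => by
      obtain ⟨p', hp', hx⟩ := mem_trapSupport.1 hx
      exact mem_trapSupport.2 ⟨p', List.mem_cons_of_mem q hp', hx⟩
    rcases List.mem_cons.1 hp with rfl | hp
    · exact hq.mono hsub
    · exact (hl.isTrap p hp).mono hsub

lemma IsTrapChain.pairwise : ∀ {l : List (V × Finset V)}, IsTrapChain G k l →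
    l.Pairwise fun p q => p.1 ≠ q.1 ∧ p.1 ∉ q.2
  | [], _ => List.Pairwise.nil
  | _ :: _, ⟨hl, hp, _⟩ => List.Pairwise.cons
      (fun q hq => ⟨fun h => hp (mem_trapSupport.2 ⟨q, hq, Or.inl h⟩),
        fun h => hp (mem_trapSupport.2 ⟨q, hq, Or.inr h⟩)⟩) hl.pairwise

theorem exists_isTrapChain (hwin : IsKCopWin G k) (hk : k < Fintype.card V) :
    ∀ m, m * (k + 1) < deltaK G k → ∃ l, l.length = m ∧ IsTrapChain G k l
  | 0, _ => ⟨[], rfl, trivial⟩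
  | m + 1, hm => by
    obtain ⟨l, rfl, hl⟩ := exists_isTrapChain hwin hk m
      (lt_of_le_of_lt (Nat.mul_le_mul_right _ m.le_succ) hm)
    have hcard : #(trapSupport l) < deltaK G k :=
      lt_of_le_of_lt ((card_trapSupport_le fun p hp => (hl.isTrap p hp).1.le).trans
        (Nat.mul_le_mul_right _ (l.length.le_succ))) hm
    obtain ⟨b, hb, A, hA⟩ := exists_isTrap hwin hk hcard
    exact ⟨(b, A) :: l, rfl, hl, hb, hA⟩

theorem exists_trapFamily (hwin : IsKCopWin G k) (hk : k < Fintype.card V) (ℓ : ℕ)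
    (hδ : ℓ * (k + 1) * (k + 1) < deltaK G k) :
    ∃ B : Finset V, #B ≤ ℓ * (k + 1) * (k + 1) ∧ ∃ (b : Fin ℓ → V) (A : Fin ℓ → Finset V),
      Function.Injective b ∧ (∀ i, b i ∈ B) ∧ (∀ i j, b i ∉ A j) ∧
        ∀ i, IsTrap G k B (b i) (A i) := by
  obtain ⟨l, hlen, hl⟩ := exists_isTrapChain hwin hk (ℓ * (k + 1)) hδ
  have htrap := hl.isTrap
  obtain ⟨l', hsub, hlen', hpw⟩ := exists_sublist_pairwise_notMem l
    (List.pairwise_map.2 (hl.pairwise.imp And.left)) fun p hp => (htrap p hp).1.le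
  have hℓ : ℓ ≤ l'.length := Nat.le_of_mul_le_mul_right (hlen ▸ hlen') k.succ_pos
  have hR : l'.Pairwise fun p q => p.1 ≠ q.1 ∧ p.1 ∉ q.2 ∧ q.1 ∉ p.2 :=
    ((hl.pairwise.sublist hsub).and hpw).imp fun ⟨⟨h₁, h₂⟩, h₃⟩ => ⟨h₁, h₂, h₃⟩
  have hRsymm : ∀ p q : V × Finset V, p.1 ≠ q.1 ∧ p.1 ∉ q.2 ∧ q.1 ∉ p.2 →
      q.1 ≠ p.1 ∧ q.1 ∉ p.2 ∧ p.1 ∉ q.2 :=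
    fun _ _ ⟨h₁, h₂, h₃⟩ => ⟨Ne.symm h₁, h₃, h₂⟩
  let e (i : Fin ℓ) : V × Finset V := l'[i.1]'(i.2.trans_le hℓ)
  have he (i : Fin ℓ) : e i ∈ l := hsub.subset (List.getElem_mem _)
  have hne {i j : Fin ℓ} (hij : i ≠ j) := pairwise_rel_getElem_of_ne hRsymm hR
    (i.2.trans_le hℓ) (j.2.trans_le hℓ) (Fin.val_ne_of_ne hij)
  refine ⟨trapSupport l, hlen ▸ card_trapSupport_le fun p hp => (htrap p hp).1.le,
    fun i => (e i).1, fun i => (e i).2, fun i j hij => ?_,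
    fun i => mem_trapSupport.2 ⟨e i, he i, Or.inl rfl⟩, fun i j => ?_, fun i => htrap _ (he i)⟩
  · by_contra hne'
    exact (hne hne').1 hij
  · rcases eq_or_ne i j with rfl | hij
    · exact (htrap _ (he i)).2.1
    · exact (hne hij).2.1

end Game

section Counting

variable {ι : Type*} {B : Finset V} {b : ι → V} {A : ι → Finset V}

def starGraph (b : ι → V) (S : ι → Finset V) : SimpleGraph V :=
  SimpleGraph.fromEdgeSet {e | ∃ i, ∃ w ∈ S i, e = s(b i, w)}

lemma starGraph_adj {S : ι → Finset V} {u v : V} :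
    (starGraph b S).Adj u v ↔ (∃ i, u = b i ∧ v ∈ S i ∨ v = b i ∧ u ∈ S i) ∧ u ≠ v := by
  simp only [starGraph, SimpleGraph.fromEdgeSet_adj, Set.mem_ofPred_eq, Sym2.eq_iff]
  constructor
  · rintro ⟨⟨i, w, hw, ⟨rfl, rfl⟩ | ⟨rfl, rfl⟩⟩, huv⟩
    · exact ⟨⟨i, Or.inl ⟨rfl, hw⟩⟩, huv⟩
    · exact ⟨⟨i, Or.inr ⟨rfl, hw⟩⟩, huv⟩
  · rintro ⟨⟨i, ⟨rfl, hv⟩ | ⟨rfl, hu⟩⟩, huv⟩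
    · exact ⟨⟨i, v, hv, Or.inl ⟨rfl, rfl⟩⟩, huv⟩
    · exact ⟨⟨i, u, hu, Or.inr ⟨rfl, rfl⟩⟩, huv⟩

lemma disjoint_starGraph {G : SimpleGraph V} {S : ι → Finset V}
    (h : ∀ i, ∀ w ∈ S i, ¬ G.Adj (b i) w) : Disjoint G (starGraph b S) := by
  refine SimpleGraph.disjoint_left.2 fun u v huv hstar => ?_
  obtain ⟨⟨i, ⟨rfl, hv⟩ | ⟨rfl, hu⟩⟩, -⟩ := starGraph_adj.1 hstar
  · exact h i v hv huv
  · exact h i u hu huv.symm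

lemma sup_starGraph_adj_iff (hb : Function.Injective b) (hbB : ∀ i, b i ∈ B)
    {G : SimpleGraph V} {S : ι → Finset V} {i : ι} {w : V} (hw : w ∉ B)
    (hG : ¬ G.Adj (b i) w) : (G ⊔ starGraph b S).Adj (b i) w ↔ w ∈ S i := by
  rw [SimpleGraph.sup_adj, or_iff_right hG, starGraph_adj]
  constructor
  · rintro ⟨⟨j, ⟨hij, hwj⟩ | ⟨rfl, -⟩⟩, -⟩
    · exact hb hij ▸ hwj
    · exact absurd (hbB j) hw
  · exact fun hwi => ⟨⟨i, Or.inl ⟨rfl, hwi⟩⟩, fun h => hw (h ▸ hbB i)⟩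

variable [Fintype V]

lemma nonNeighborFinset_sup_starGraph_sdiff (hbB : ∀ i, b i ∈ B) (hbA : ∀ i j, b i ∉ A j)
    (G : SimpleGraph V) (S : ι → Finset V) (i : ι) :
    nonNeighborFinset (G ⊔ starGraph b S) (A i) \ B = nonNeighborFinset G (A i) \ B := by
  have hstar : ∀ w ∉ B, ∀ u ∈ A i, ¬ (starGraph b S).Adj u w := by
    rintro w hw u hu hadj
    obtain ⟨⟨j, ⟨rfl, -⟩ | ⟨rfl, -⟩⟩, -⟩ := starGraph_adj.1 hadj
    · exact hbA j i hu
    · exact hw (hbB j)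
  ext w
  simp only [Finset.mem_sdiff, mem_nonNeighborFinset, SimpleGraph.sup_adj]
  constructor
  · exact fun ⟨h, hw⟩ => ⟨fun u hu => ⟨(h u hu).1, fun hG => (h u hu).2 (Or.inl hG)⟩, hw⟩
  · exact fun ⟨h, hw⟩ => ⟨fun u hu => ⟨(h u hu).1, not_or.2 ⟨(h u hu).2, hstar w hw u hu⟩⟩, hw⟩

def StarsAbsent (G : SimpleGraph V) (B : Finset V) (b : ι → V) (A : ι → Finset V) (s : ℕ) :
    Prop :=
  ∀ i, s ≤ #(nonNeighborFinset G (A i) \ B) ∧ ∀ w ∈ nonNeighborFinset G (A i) \ B, ¬ G.Adj (b i) w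

lemma eq_filter_adj_sup_starGraph (hb : Function.Injective b) (hbB : ∀ i, b i ∈ B)
    (hbA : ∀ i j, b i ∉ A j) {G : SimpleGraph V} {s : ℕ} (hG : StarsAbsent G B b A s)
    {S : ι → Finset V} (hS : ∀ i, S i ⊆ nonNeighborFinset G (A i) \ B) (i : ι) :
    S i = (nonNeighborFinset (G ⊔ starGraph b S) (A i) \ B).filter
      ((G ⊔ starGraph b S).Adj (b i)) := by
  rw [nonNeighborFinset_sup_starGraph_sdiff hbB hbA]
  ext w
  rw [mem_filter]
  constructor
  · intro hw
    have hwT := hS i hw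
    exact ⟨hwT, (sup_starGraph_adj_iff hb hbB (mem_sdiff.1 hwT).2 ((hG i).2 w hwT)).2 hw⟩
  · rintro ⟨hwT, hadj⟩
    exact (sup_starGraph_adj_iff hb hbB (mem_sdiff.1 hwT).2 ((hG i).2 w hwT)).1 hadj

lemma card_simpleGraph_le : Fintype.card (SimpleGraph V) ≤ 2 ^ (Fintype.card V).choose 2 := by
  rw [← SimpleGraph.card_edgeFinset_top_eq_card_choose_two, ← card_powerset, ← card_univ]
  exact card_le_card_of_injOn (·.edgeFinset)
    (fun G _ => mem_powerset.2 (SimpleGraph.edgeFinset_subset_edgeFinset.2 le_top))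
    (fun G _ G' _ h => SimpleGraph.edgeFinset_inj.1 h)

/-- Adding, for every `i`, edges from `b i` to an arbitrary subset of its absent star is
injective, so each graph with absent stars accounts for `2 ^ (|ι| s)` distinct graphs. -/
theorem card_starsAbsent_mul_le [Fintype ι] (hb : Function.Injective b) (hbB : ∀ i, b i ∈ B)
    (hbA : ∀ i j, b i ∉ A j) (s : ℕ) :
    #{G : SimpleGraph V | StarsAbsent G B b A s} * 2 ^ (Fintype.card ι * s) ≤
      2 ^ (Fintype.card V).choose 2 := by
  set P : Finset (SimpleGraph V) := {G | StarsAbsent G B b A s}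
  let X := P.sigma fun G => Fintype.piFinset fun i => (nonNeighborFinset G (A i) \ B).powerset
  have hX : #P * 2 ^ (Fintype.card ι * s) ≤ #X := by
    rw [card_sigma, ← smul_eq_mul]
    refine card_nsmul_le_sum _ _ _ fun G hG => ?_
    rw [Fintype.card_piFinset]
    calc 2 ^ (Fintype.card ι * s) = ∏ _i : ι, 2 ^ s := by
          rw [prod_const, card_univ, ← pow_mul, mul_comm]
      _ ≤ ∏ i, #(nonNeighborFinset G (A i) \ B).powerset := prod_le_prod' fun i _ => by
          rw [card_powerset]
          exact Nat.pow_le_pow_right two_pos ((mem_filter.1 hG).2 i).1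
  have hinj : Set.InjOn (fun x : Σ _ : SimpleGraph V, ι → Finset V => x.1 ⊔ starGraph b x.2) X := by
    rintro ⟨G, S⟩ hx ⟨G', S'⟩ hx' hH
    simp only [X, coe_sigma, Set.mem_sigma_iff, mem_coe, Fintype.mem_piFinset, mem_powerset,
      P, mem_filter, mem_univ, true_and] at hx hx' hH
    have hS : S = S' := funext fun i => by
      rw [eq_filter_adj_sup_starGraph hb hbB hbA hx.1 hx.2 i,
        eq_filter_adj_sup_starGraph hb hbB hbA hx'.1 hx'.2 i]
      simp only [hH]
    subst hS
    have hG : G = G' := by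
      rw [← (disjoint_starGraph fun i w hw => (hx.1 i).2 w (hx.2 i hw)).sdiff_eq_left,
        ← (disjoint_starGraph fun i w hw => (hx'.1 i).2 w (hx'.2 i hw)).sdiff_eq_left,
        ← sup_sdiff_right_self, hH, sup_sdiff_right_self]
    rw [hG]
  calc #P * 2 ^ (Fintype.card ι * s) ≤ #X := hX
    _ ≤ Fintype.card (SimpleGraph V) := card_le_card_of_injOn _ (fun _ _ => mem_univ _) hinj
    _ ≤ 2 ^ (Fintype.card V).choose 2 := card_simpleGraph_le

lemma card_filter_card_le_pow (M : ℕ) :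
    #{s : Finset V | #s ≤ M} ≤ (Fintype.card V + 1) ^ M := by
  have hsurj : ({s | #s ≤ M} : Finset (Finset V)) ⊆
      univ.image fun f : Fin M → Option V => eraseNone (univ.image f) := fun s hs => by
    refine mem_image.2 ⟨fun i => s.toList[i.1]?, mem_univ _, ?_⟩
    ext x
    simp only [mem_eraseNone, mem_image, mem_univ, true_and, List.getElem?_eq_some_iff]
    constructor
    · rintro ⟨i, hi, rfl⟩
      exact mem_toList.1 (List.getElem_mem hi)
    · intro hx
      obtain ⟨i, hi, rfl⟩ := List.getElem_of_mem (mem_toList.2 hx)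
      exact ⟨⟨i, hi.trans_le ((length_toList s).trans_le (mem_filter.1 hs).2)⟩, hi, rfl⟩
  calc #{s : Finset V | #s ≤ M} ≤ #(univ : Finset (Fin M → Option V)) :=
        (card_le_card hsurj).trans card_image_le
    _ = (Fintype.card V + 1) ^ M := by simp

lemma starsAbsent_of_isTrap {G : SimpleGraph V} {k s : ℕ} (hB : #B + s < deltaK G k)
    (h : ∀ i, IsTrap G k B (b i) (A i)) : StarsAbsent G B b A s := fun i =>
  ⟨by have := deltaK_le_card_nonNeighborFinset (G := G) (h i).1
      have := le_card_sdiff B (nonNeighborFinset G (A i))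
      omega,
    fun w hw hbw => (mem_sdiff.1 hw).2 ((h i).2.2 w (mem_sdiff.1 hw).1 (Or.inr hbw))⟩

/-- Union bound over the data `(B, b, A)` produced by `exists_trapFamily`. -/
theorem card_copWin_mul_le {k : ℕ} (hk : k < Fintype.card V) (ℓ s : ℕ) :
    Nat.card {G : SimpleGraph V // IsKCopWin G k ∧ ℓ * (k + 1) * (k + 1) + s < deltaK G k} *
        2 ^ (ℓ * s) ≤
      (Fintype.card V + 1) ^ (ℓ * (k + 1) * (k + 1) + ℓ * (k + 1)) *
        2 ^ (Fintype.card V).choose 2 := by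
  rw [Nat.card_eq_fintype_card, Fintype.card_subtype]
  set M := ℓ * (k + 1) * (k + 1) with hM
  set n := Fintype.card V
  let D : Finset (Finset V × (Fin ℓ → V) × (Fin ℓ → Finset V)) :=
    ({B | #B ≤ M} : Finset (Finset V)) ×ˢ (univ : Finset (Fin ℓ → V)) ×ˢ
      Fintype.piFinset fun _ => ({A | #A ≤ k} : Finset (Finset V))
  let D' := D.filter fun d => Function.Injective d.2.1 ∧ (∀ i, d.2.1 i ∈ d.1) ∧
    ∀ i j, d.2.1 i ∉ d.2.2 j
  have hcover : ({G | IsKCopWin G k ∧ M + s < deltaK G k} : Finset (SimpleGraph V)) ⊆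
      D'.biUnion fun d => {G | StarsAbsent G d.1 d.2.1 d.2.2 s} := fun G hG => by
    obtain ⟨hwin, hδ⟩ := (mem_filter.1 hG).2
    obtain ⟨B, hB, b, A, hb, hbB, hbA, htrap⟩ := exists_trapFamily hwin hk ℓ (by omega)
    rw [← hM] at hB
    refine mem_biUnion.2 ⟨(B, b, A), mem_filter.2 ⟨?_, hb, hbB, hbA⟩, ?_⟩
    · simp [D, hB, fun i => (htrap i).1]
    · exact mem_filter.2 ⟨mem_univ _, starsAbsent_of_isTrap (B := B) (by omega) htrap⟩
  have hD : #D' ≤ (n + 1) ^ (M + ℓ * (k + 1)) :=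
    calc #D' ≤ #{B : Finset V | #B ≤ M} * (n ^ ℓ * #{A : Finset V | #A ≤ k} ^ ℓ) := by
          simpa [D] using card_filter_le D _
      _ ≤ (n + 1) ^ M * ((n + 1) ^ ℓ * ((n + 1) ^ k) ^ ℓ) := by
          gcongr
          exacts [card_filter_card_le_pow M, n.le_succ, card_filter_card_le_pow k]
      _ = (n + 1) ^ (M + ℓ * (k + 1)) := by ring
  calc _ ≤ #D' * 2 ^ n.choose 2 := card_mul_le_of_subset_biUnion hcover fun d hd => by
        obtain ⟨-, hb, hbB, hbA⟩ := mem_filter.1 hd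
        simpa using card_starsAbsent_mul_le hb hbB hbA s
    _ ≤ _ := Nat.mul_le_mul_right _ hD

end Counting

lemma eventually_pow_le_two_rpow (Q : ℕ) (c : ℝ) :
    ∀ᶠ n : ℕ in atTop, ((n : ℝ) + 1) ^ Q ≤ 2 ^ ((n : ℝ) - c) := by
  have h := (tendsto_add_atTop_iff_nat 1).2
    (tendsto_pow_const_div_const_pow_of_one_lt Q one_lt_two)
  filter_upwards [h.eventually_lt_const (by positivity : (0 : ℝ) < 2 ^ (-c - 1))] with n hn
  rw [div_lt_iff₀ (by positivity), ← Real.rpow_natCast 2, ← Real.rpow_add two_pos] at hn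
  push_cast at hn
  refine hn.le.trans_eq ?_
  congr 1
  ring

theorem eventually_card_copWin_le (k : ℕ) {ξ : ℝ} (hξ : 0 < ξ) (C : ℝ) :
    ∀ᶠ n : ℕ in atTop,
      (Nat.card {G : SimpleGraph (Fin n) // IsKCopWin G k ∧ ξ * n < (deltaK G k : ℝ)} : ℝ) ≤
        2 ^ (-C * n) * 2 ^ n.choose 2 := by
  obtain ⟨ℓ, hℓ⟩ : ∃ ℓ : ℕ, C + 1 ≤ ξ * ℓ :=
    ⟨⌈(C + 1) / ξ⌉₊, by rw [mul_comm, ← div_le_iff₀ hξ]; exact Nat.le_ceil _⟩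
  set M := ℓ * (k + 1) * (k + 1)
  have hlin : Tendsto (fun n : ℕ => ξ * n) atTop atTop :=
    tendsto_natCast_atTop_atTop.const_mul_atTop hξ
  filter_upwards [eventually_gt_atTop k, hlin.eventually_ge_atTop (M : ℝ),
    eventually_pow_le_two_rpow (M + ℓ * (k + 1)) (ℓ * (M + 1))] with n hk hMn hpow
  set s := ⌊ξ * n⌋₊ - M
  have hMs : M + s = ⌊ξ * n⌋₊ := Nat.add_sub_of_le (Nat.le_floor hMn)
  have hs : ξ * n - 1 - M ≤ s := by
    have := Nat.lt_floor_add_one (ξ * n)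
    rw [← hMs] at this
    push_cast at this
    linarith
  have hcount : (Nat.card {G : SimpleGraph (Fin n) // IsKCopWin G k ∧ ξ * n < (deltaK G k : ℝ)} : ℝ)
      * 2 ^ (ℓ * s) ≤ ((n : ℝ) + 1) ^ (M + ℓ * (k + 1)) * 2 ^ n.choose 2 := by
    have hsub : Nat.card {G : SimpleGraph (Fin n) // IsKCopWin G k ∧ ξ * n < (deltaK G k : ℝ)} ≤
        Nat.card {G : SimpleGraph (Fin n) // IsKCopWin G k ∧ M + s < deltaK G k} :=
      Nat.card_mono (Set.toFinite _) fun G ⟨hwin, hδ⟩ =>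
        ⟨hwin, hMs ▸ (Nat.floor_lt (by positivity)).2 hδ⟩
    have := (Nat.mul_le_mul_right _ hsub).trans
      (card_copWin_mul_le (V := Fin n) (by simpa using hk) ℓ s)
    simpa using (Nat.cast_le (α := ℝ)).2 this
  have hexp : (n : ℝ) - ℓ * (M + 1) ≤ -C * n + (ℓ * s : ℕ) := by
    have h₁ : (ℓ : ℝ) * (ξ * n - 1 - M) ≤ ℓ * s := mul_le_mul_of_nonneg_left hs ℓ.cast_nonneg
    have h₂ : (C + 1) * n ≤ ξ * ℓ * n := mul_le_mul_of_nonneg_right hℓ n.cast_nonneg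
    push_cast
    linarith
  refine le_of_mul_le_mul_right (hcount.trans ?_) (by positivity : (0 : ℝ) < 2 ^ (ℓ * s))
  calc ((n : ℝ) + 1) ^ (M + ℓ * (k + 1)) * 2 ^ n.choose 2
      ≤ 2 ^ (-C * n + (ℓ * s : ℕ)) * 2 ^ n.choose 2 := by
        gcongr
        exact hpow.trans (Real.rpow_le_rpow_of_exponent_le one_le_two hexp)
    _ = 2 ^ (-C * n) * 2 ^ n.choose 2 * 2 ^ (ℓ * s) := by
        rw [Real.rpow_add two_pos, Real.rpow_natCast]
        ring

end CopsAndRobbers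

theorem kCopWin_large_deltaK_count_general (k : ℕ) (ξ : ℝ) (hξ : 0 < ξ) :
    ∃ ε : ℝ, 0 < ε ∧
      ∀ᶠ n : ℕ in atTop,
        (Nat.card {G : SimpleGraph (Fin n) //
            IsKCopWin G k ∧ ξ * n < (deltaK G k : ℝ)} : ℝ) ≤
          2 ^ ((Real.logb 2 (1 - 2 ^ (-(k : ℝ))) - ε) * n) * 2 ^ (n * (n - 1) / 2) := by
  refine ⟨1, one_pos, ?_⟩
  filter_upwards
    [CopsAndRobbers.eventually_card_copWin_le k hξ (1 - Real.logb 2 (1 - 2 ^ (-(k : ℝ))))]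
    with n hn
  rw [Nat.choose_two_right] at hn
  convert hn using 3
  ring

/-- Theorem (b): for every `ξ > 0` there is `ε > 0` such that for all large `n`, the number of
labelled `k`-cop-win graphs on `{1,…,n}` with `δ_k > ξn` is at most
`2^{(log₂(1-2^{-k}) - ε) n} · 2^{n(n-1)/2}`. -/
theorem kCopWin_large_deltaK_count (k : ℕ) (hk : 1 ≤ k) (ξ : ℝ) (hξ : 0 < ξ) :
    ∃ ε : ℝ, 0 < ε ∧
      ∀ᶠ n : ℕ in atTop,
        (Nat.card {G : SimpleGraph (Fin n) //
            IsKCopWin G k ∧ ξ * n < (deltaK G k : ℝ)} : ℝ) ≤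
          2 ^ ((Real.logb 2 (1 - 2 ^ (-(k : ℝ))) - ε) * n) * 2 ^ (n * (n - 1) / 2) :=
  kCopWin_large_deltaK_count_general k ξ hξ
end

section
/- Let k ≥ 1 be an integer. There exist ξ ∈ (0, 1/2] and ε > 0 such that the following holds for every n ≥ 1. Let V = {1,…,n+k+1}, let S ⊆ V with |S| = k, let v ∈ V \ S, let T ⊊ S with |T| = ℓ (0 ≤ ℓ < k), set W = V \ (S ∪ {v}), and let a, b, c be integers with 0 ≤ a ≤ b ≤ n and 0 ≤ c ≤ ξn. Then the number of labelled graphs G on V satisfying simultaneously: (p1) v has no neighbour in S; (p2) exactly b vertices of W are adjacent to v; (p3) exactly c vertices of W have no neighbour in S; (p4) exactly a vertices u ∈ N(v) have at least one neighbour in S and no neighbour in T; and (p5) it is NOT the case that for every U ⊆ W with |U| = k−ℓ and every w ∈ W \ U there exists a vertex w' ∈ N(v) adjacent to w and with no neighbour in T ∪ U; is at most 2^{(log₂(1−2^{−k}) − ε) n} · 2^{(n+k+1)(n+k)/2}. -/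
open Filter Topology

/-!
If the escape property fails, fix a witness `(U, w)` and the set `C₀` of the `c` vertices of
`W` not dominated by `S`. Every other vertex `u ∈ W \ ({w} ∪ U)` is dominated by `S` but is not a
common neighbour of `v` and `w` without neighbours in `T ∪ U`. The neighbourhoods of distinct such
`u` in the fixed set `{v, w} ∪ S ∪ U` are independent, and each has this property with probability
at most `1 - 2⁻ᵏ - 2⁻⁽ᵏ⁺³⁾ ≤ (1 - 2⁻ᵏ)(1 - 2⁻⁽ᵏ⁺³⁾)`. The union bound over the choices of
`(U, w, C₀)` costs a factor `n^{k+1} · C(n, c)`, and `C(n, c) 4^c ≤ (1 + ρ)^{2n}` when `c ≤ ξ n`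
with `ξ` small (from `C(n, c) ρ^c ≤ (1 + ρ)^n`), so for large `n` everything is absorbed by
`(1 - 2⁻⁽ᵏ⁺³⁾)ⁿ`. For the finitely many small `n`, `c ≤ ξ n` forces `c = 0`, and then (p1) alone
gives the extra factor `2⁻ᵏ`.
-/

open Finset Function

section FunctionCounting

variable {σ : Type*} [Finite σ]

lemma Nat.card_subtype_add_card_subtype_not (P : σ → Prop) :
    Nat.card {x // P x} + Nat.card {x // ¬ P x} = Nat.card σ :=
  Set.ncard_add_ncard_compl {x | P x}

lemma card_subtype_comp_of_injective {A E β : Type*} [Finite E] {ι : A → E}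
    (hι : Injective ι) (Q : (A → β) → Prop) :
    Nat.card {f : E → β // Q (f ∘ ι)} =
      Nat.card {F : A → β // Q F} * Nat.card β ^ (Nat.card E - Nat.card A) := by
  classical
  have : Finite A := Finite.of_injective ι hι
  let R := {e // e ∉ Set.range ι}
  let e : E ≃ A ⊕ R := (Equiv.sumCompl (· ∈ Set.range ι)).symm.trans
    (Equiv.sumCongr (Equiv.ofInjective ι hι).symm (Equiv.refl R))
  have hcard : Nat.card E = Nat.card A + Nat.card R := by
    rw [Nat.card_congr e, Nat.card_sum]
  let split : (E → β) ≃ (A → β) × (R → β) :=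
    (e.arrowCongr (Equiv.refl β)).trans (Equiv.sumArrowEquivProdArrow _ _ _)
  have hsplit : ∀ f, (split f).1 = f ∘ ι := fun f => by
    funext a
    simp [split, e, Equiv.arrowCongr, Equiv.sumArrowEquivProdArrow]
  rw [Nat.card_congr ((Equiv.subtypeEquiv split fun f => by rw [hsplit]).trans
    Equiv.prodSubtypeFstEquivSubtypeProd), Nat.card_prod, Nat.card_fun, hcard,
    Nat.add_sub_cancel_left]

lemma card_forall_imp_iff (F pat : σ → Prop) :
    Nat.card {g : σ → Prop // ∀ x, F x → (g x ↔ pat x)} = 2 ^ Nat.card {x // ¬ F x} := by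
  have hunique : Nat.card {h : {x // F x} → Prop // ∀ x, h x ↔ pat x} = 1 :=
    Nat.card_eq_one_iff_unique.2
      ⟨⟨fun h₁ h₂ => Subtype.ext (funext fun x => propext ((h₁.2 x).trans (h₂.2 x).symm))⟩,
        ⟨⟨fun x => pat x, fun _ => Iff.rfl⟩⟩⟩
  have hcomp := card_subtype_comp_of_injective Subtype.val_injective
    (fun h : {x // F x} → Prop => ∀ x, h x ↔ pat x)
  rw [hunique, one_mul, Nat.card_eq_fintype_card (α := Prop), Fintype.card_prop,
    ← Nat.card_subtype_add_card_subtype_not F, Nat.add_sub_cancel_left] at hcomp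
  rw [← hcomp]
  exact Nat.card_congr (Equiv.subtypeEquivRight fun g =>
    ⟨fun h x => h x x.2, fun h x hx => h ⟨x, hx⟩⟩)

lemma card_forall_not : Nat.card {g : σ → Prop // ∀ x, ¬ g x} = 1 := by
  simpa using card_forall_imp_iff (fun _ : σ => True) (fun _ => False)

lemma card_exists : Nat.card {g : σ → Prop // ∃ x, g x} = 2 ^ Nat.card σ - 1 := by
  have h := Nat.card_subtype_add_card_subtype_not (fun g : σ → Prop => ∃ x, g x)
  simp only [not_exists, card_forall_not, Nat.card_fun, Nat.card_eq_fintype_card (α := Prop),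
    Fintype.card_prop] at h
  omega

lemma card_exists_and_not_forall_add_le (A F pat : σ → Prop) (hAF : ∀ x, A x ∨ F x) :
    Nat.card {g : σ → Prop // (∃ x, A x ∧ g x) ∧ ¬ ∀ x, F x → (g x ↔ pat x)} +
      2 ^ Nat.card {x // ¬ A x} + 2 ^ Nat.card {x // ¬ F x} ≤ 2 ^ Nat.card σ + 1 := by
  set X : Set (σ → Prop) := {g | ∀ x, A x → (g x ↔ False)}
  set Y : Set (σ → Prop) := {g | ∀ x, F x → (g x ↔ pat x)}
  have hX : X.ncard = 2 ^ Nat.card {x // ¬ A x} := card_forall_imp_iff A fun _ => False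
  have hY : Y.ncard = 2 ^ Nat.card {x // ¬ F x} := card_forall_imp_iff F pat
  -- a pattern that is empty on `A` and prescribed on `F` is prescribed everywhere
  have hXY : (X ∩ Y).ncard ≤ 1 := by
    refine (Set.ncard_le_one (Set.toFinite _)).2 fun g₁ h₁ g₂ h₂ => funext fun x => propext ?_
    rcases hAF x with hx | hx
    · exact (h₁.1 x hx).trans (h₂.1 x hx).symm
    · exact (h₁.2 x hx).trans (h₂.2 x hx).symm
  have hcompl : {g : σ → Prop | (∃ x, A x ∧ g x) ∧ ¬ ∀ x, F x → (g x ↔ pat x)} = (X ∪ Y)ᶜ := by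
    ext g
    simp [X, Y]
  have hunion := Set.ncard_union_add_ncard_inter X Y
  have htotal := Set.ncard_add_ncard_compl (X ∪ Y)
  rw [Nat.card_fun, Nat.card_eq_fintype_card (α := Prop), Fintype.card_prop] at htotal
  change Set.ncard {g : σ → Prop | _} + _ + _ ≤ _
  rw [hcompl, ← hX, ← hY]
  omega

end FunctionCounting

namespace SimpleGraph

variable {V : Type*}

def equivEdgePred : SimpleGraph V ≃ ({e : Sym2 V // ¬ e.IsDiag} → Prop) where
  toFun G e := e.1 ∈ G.edgeSet
  invFun f := fromEdgeSet {e | ∃ h, f ⟨e, h⟩}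
  left_inv G := by
    ext x y
    simp only [fromEdgeSet_adj, Set.mem_ofPred_eq, mem_edgeSet]
    exact ⟨fun h => h.1.2, fun h => ⟨⟨by simpa using h.ne, h⟩, h.ne⟩⟩
  right_inv f := by
    funext e
    simp [edgeSet_fromEdgeSet, e.2]

def crossEdge {dom tgt : Finset V} (h : Disjoint dom tgt) (p : dom × tgt) :
    {e : Sym2 V // ¬ e.IsDiag} :=
  ⟨s(p.1.1, p.2.1), by
    simpa using fun he : p.1.1 = p.2.1 => Finset.disjoint_left.1 h p.1.2 (he ▸ p.2.2)⟩

lemma crossEdge_injective {dom tgt : Finset V} (h : Disjoint dom tgt) :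
    Injective (crossEdge h) := by
  rintro ⟨u, x⟩ ⟨u', x'⟩ he
  simp only [crossEdge, Subtype.mk.injEq, Sym2.eq_iff] at he
  rcases he with ⟨hu, hx⟩ | ⟨hu, -⟩
  · exact Prod.ext (Subtype.ext hu) (Subtype.ext hx)
  · exact absurd x'.2 (Finset.disjoint_left.1 h (hu ▸ u.2))

variable [Fintype V] [DecidableEq V]

lemma card_mul_card_le_choose_two {dom tgt : Finset V} (h : Disjoint dom tgt) :
    #dom * #tgt ≤ (Fintype.card V).choose 2 := by
  simpa [← Sym2.card_subtype_not_diag] using Fintype.card_le_of_injective _ (crossEdge_injective h)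

theorem card_forall_rows {dom tgt : Finset V} (h : Disjoint dom tgt)
    (P : V → (tgt → Prop) → Prop) :
    Nat.card {G : SimpleGraph V // ∀ u ∈ dom, P u fun x => G.Adj u x} =
      (∏ u : dom, Nat.card {g // P u g}) * 2 ^ ((Fintype.card V).choose 2 - #dom * #tgt) := by
  have hrows : Nat.card {F : dom × tgt → Prop // ∀ u : dom, P u fun x => F (u, x)} =
      ∏ u : dom, Nat.card {g // P u g} := by
    rw [← Nat.card_pi]
    exact Nat.card_congr ((Equiv.subtypeEquivOfSubtype (Equiv.curry _ _ _)).trans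
      Equiv.subtypePiEquivPi)
  have hcomp := card_subtype_comp_of_injective (crossEdge_injective h)
    fun F : dom × tgt → Prop => ∀ u : dom, P u fun x => F (u, x)
  rw [hrows, Nat.card_eq_fintype_card (α := Prop), Fintype.card_prop,
    Nat.card_eq_fintype_card (α := {e : Sym2 V // ¬ e.IsDiag}), Sym2.card_subtype_not_diag,
    Nat.card_prod, Nat.card_eq_finsetCard, Nat.card_eq_finsetCard] at hcomp
  rw [← hcomp]
  exact Nat.card_congr (Equiv.subtypeEquiv equivEdgePred fun G =>
    ⟨fun hG u => hG u u.2, fun hG u hu => hG ⟨u, hu⟩⟩)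

theorem card_forall_rows_le {dom tgt : Finset V} (h : Disjoint dom tgt)
    (P : V → (tgt → Prop) → Prop) (q : V → ℝ)
    (hq : ∀ u ∈ dom, (Nat.card {g // P u g} : ℝ) ≤ q u * 2 ^ #tgt) :
    (Nat.card {G : SimpleGraph V // ∀ u ∈ dom, P u fun x => G.Adj u x} : ℝ) ≤
      (∏ u ∈ dom, q u) * 2 ^ (Fintype.card V).choose 2 := by
  have hprod : ∏ u : dom, (Nat.card {g // P u g} : ℝ) ≤ ∏ u : dom, q u * 2 ^ #tgt :=
    prod_le_prod (fun _ _ => by positivity) fun u _ => hq u u.2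
  rw [prod_mul_distrib, prod_const, card_univ, Fintype.card_coe, prod_coe_sort, ← pow_mul]
    at hprod
  rw [card_forall_rows h, Nat.cast_mul, Nat.cast_prod, Nat.cast_pow, Nat.cast_ofNat]
  calc _ ≤ (∏ u ∈ dom, q u) * 2 ^ (#tgt * #dom) * 2 ^ ((Fintype.card V).choose 2 - #dom * #tgt) :=
        mul_le_mul_of_nonneg_right hprod (by positivity)
    _ = _ := by
      rw [mul_assoc, ← pow_add, mul_comm #tgt, Nat.add_sub_cancel' (card_mul_card_le_choose_two h)]

end SimpleGraph

lemma Nat.card_subtype_finset {α : Type*} (s : Finset α) (p : α → Prop) [DecidablePred p] :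
    Nat.card {x : s // p x} = #{x ∈ s | p x} := by
  rw [← Nat.card_eq_finsetCard]
  exact Nat.card_congr ((Equiv.subtypeSubtypeEquivSubtypeInter (· ∈ s) p).trans
    (Equiv.subtypeEquivRight fun x => (mem_filter (s := s) (p := p)).symm))

lemma Nat.card_le_sum_of_forall_exists {α ι : Type*} [Finite α] {P : α → Prop} {I : Finset ι}
    {Q : ι → α → Prop} (h : ∀ x, P x → ∃ i ∈ I, Q i x) :
    Nat.card {x // P x} ≤ ∑ i ∈ I, Nat.card {x // Q i x} :=
  (Set.ncard_le_ncard (fun x hx => by simpa using h x hx) (Set.toFinite _)).trans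
    (I.set_ncard_biUnion_le fun i => {x | Q i x})

section Counting

variable {V : Type*} [Fintype V] [DecidableEq V]

lemma card_le_of_undominated_eq_zero (S : Finset V) {v : V} (hv : v ∉ S) :
    (Nat.card {G : SimpleGraph V // (∀ u ∈ S, ¬ G.Adj v u) ∧
        {w | w ∉ S ∧ w ≠ v ∧ ∀ u ∈ S, ¬ G.Adj u w}.ncard = 0} : ℝ) ≤
      (1 / 2) ^ #S * (1 - (1 / 2) ^ #S) ^ #(univ \ insert v S) *
        2 ^ (Fintype.card V).choose 2 := by
  have hvW : v ∉ univ \ insert v S := by simp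
  have hdisj : Disjoint (insert v (univ \ insert v S)) S :=
    disjoint_left.2 fun x hx hxS => by simp only [mem_insert, Finset.mem_sdiff] at hx; grind
  have hrows := SimpleGraph.card_forall_rows_le hdisj
    (fun u g => if u = v then ∀ x, ¬ g x else ∃ x, g x)
    (fun u => if u = v then (1 / 2) ^ #S else 1 - (1 / 2) ^ #S) fun u _ => by
      have hS : (1 / 2 : ℝ) ^ #S * 2 ^ #S = 1 := by rw [← mul_pow]; norm_num
      split_ifs
      · rw [card_forall_not, Nat.cast_one, hS]
      · rw [card_exists, Nat.card_eq_finsetCard, Nat.cast_sub Nat.one_le_two_pow]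
        push_cast
        linarith
  rw [prod_insert hvW, if_pos rfl,
    prod_congr rfl fun u hu => if_neg (ne_of_mem_of_not_mem hu hvW), prod_const] at hrows
  refine le_trans ?_ (hrows.trans_eq (by ring))
  refine Nat.cast_le.2 (Nat.card_mono (Set.toFinite _) ?_)
  rintro G ⟨hvS, hnone⟩ u hu
  split_ifs with huv
  · subst huv
    exact fun x => hvS x x.2
  · by_contra hnd
    push Not at hnd
    have hmem : u ∈ {w | w ∉ S ∧ w ≠ v ∧ ∀ u ∈ S, ¬ G.Adj u w} :=
      ⟨by simp only [mem_insert, Finset.mem_sdiff] at hu; grind, huv,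
        fun s hs hsu => hnd ⟨s, hs⟩ hsu.symm⟩
    rwa [(Set.ncard_eq_zero (Set.toFinite _)).1 hnone] at hmem

def HasEscapeProperty (G : SimpleGraph V) (S T : Finset V) (v : V) : Prop :=
  ∀ U : Finset V, (∀ x ∈ U, x ∉ S ∧ x ≠ v) → #U = #S - #T →
    ∀ w, w ∉ S → w ≠ v → w ∉ U →
      ∃ w', G.Adj v w' ∧ G.Adj w w' ∧ (∀ t ∈ T, ¬ G.Adj t w') ∧ ∀ u ∈ U, ¬ G.Adj u w'

/-- `g` is the neighbourhood of a vertex `u` in `{v, w} ∪ S ∪ U`, and says that `u` is dominated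
by `S` but is not a common neighbour of `v` and `w` with no neighbour in `T ∪ U`. -/
def IsBlockingRow (S T U : Finset V) (v w : V)
    (g : (insert v (insert w (S ∪ U)) : Finset V) → Prop) : Prop :=
  (∃ x, x.1 ∈ S ∧ g x) ∧
    ¬ ∀ x, (x.1 = v ∨ x.1 = w ∨ x.1 ∈ T ∨ x.1 ∈ U) → (g x ↔ x.1 = v ∨ x.1 = w)

/-- `1 - 2⁻ᵏ` is the share of neighbourhood patterns dominated by `S`, and at least `2⁻⁽ᵏ⁺³⁾` of
all patterns are dominated by `S` and make `u` a common neighbour of `v` and `w` with no neighbour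
in `T ∪ U`. -/
noncomputable def blockingRatio (k : ℕ) : ℝ := 1 - (1/2) ^ k - (1/2) ^ (k + 3)

lemma blockingRatio_bounds {k : ℕ} (hk : 1 ≤ k) :
    1 / 4 ≤ blockingRatio k ∧ blockingRatio k ≤ 1 ∧
      blockingRatio k ≤ (1 - (1/2) ^ k) * (1 - (1/2) ^ (k + 3)) := by
  unfold blockingRatio
  have hk : (1 / 2 : ℝ) ^ k ≤ (1 / 2) ^ 1 := pow_le_pow_of_le_one (by norm_num) (by norm_num) hk
  have hpos := pow_pos (one_half_pos (α := ℝ)) k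
  rw [pow_add]
  refine ⟨?_, ?_, ?_⟩ <;> nlinarith

lemma card_isBlockingRow_le {S T U : Finset V} {v w : V} (hTS : T ⊂ S)
    (hU : ∀ x ∈ U, x ∉ S ∧ x ≠ v) (hUcard : #U = #S - #T)
    (hvS : v ∉ S) (hwS : w ∉ S) (hwv : w ≠ v) (hwU : w ∉ U) :
    (Nat.card {g // IsBlockingRow S T U v w g} : ℝ) ≤
      blockingRatio #S * 2 ^ #(insert v (insert w (S ∪ U))) := by
  unfold IsBlockingRow blockingRatio
  have hcount := card_exists_and_not_forall_add_le
    (fun x : (insert v (insert w (S ∪ U)) : Finset V) => x.1 ∈ S)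
    (fun x => x.1 = v ∨ x.1 = w ∨ x.1 ∈ T ∨ x.1 ∈ U) (fun x => x.1 = v ∨ x.1 = w)
    fun x => by have := x.2; simp only [mem_insert, mem_union] at this; tauto
  have hT : #T < #S := card_lt_card hTS
  have hvU : v ∉ U := fun h => (hU v h).2 rfl
  have htgt : #(insert v (insert w (S ∪ U))) = #S + #U + 2 := by
    rw [card_insert_of_notMem (by simp [hvS, hvU, hwv.symm]),
      card_insert_of_notMem (by simp [hwS, hwU]),
      card_union_of_disjoint (disjoint_left.2 fun x hxS hxU => (hU x hxU).1 hxS)]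
  have hnotS : {x ∈ insert v (insert w (S ∪ U)) | x ∉ S} = insert v (insert w U) := by
    ext x; simp only [mem_filter, mem_insert, mem_union]; grind
  have hnotF : {x ∈ insert v (insert w (S ∪ U)) | ¬ (x = v ∨ x = w ∨ x ∈ T ∨ x ∈ U)} = S \ T := by
    ext x; simp only [mem_filter, mem_insert, mem_union, Finset.mem_sdiff]; grind
  rw [Nat.card_subtype_finset _ (· ∉ S), hnotS,
    Nat.card_subtype_finset _ (fun x => ¬ (x = v ∨ x = w ∨ x ∈ T ∨ x ∈ U)), hnotF,
    Nat.card_eq_finsetCard, htgt,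
    card_insert_of_notMem (by simp [hvU, hwv.symm]), card_insert_of_notMem hwU,
    card_sdiff_of_subset hTS.subset, ← hUcard] at hcount
  rw [htgt]
  obtain ⟨i, hi⟩ : ∃ i, #U = i + 1 := ⟨#U - 1, by omega⟩
  rw [hi] at hcount ⊢
  have hcount' := (Nat.cast_le (α := ℝ)).2 hcount
  push_cast at hcount'
  have h1 : (1 / 2 : ℝ) ^ #S * 2 ^ (#S + (i + 1) + 2) = 2 ^ (i + 3) := by
    rw [show #S + (i + 1) + 2 = #S + (i + 3) by ring, pow_add, ← mul_assoc, ← mul_pow]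
    norm_num
  have h2 : (1 / 2 : ℝ) ^ (#S + 3) * 2 ^ (#S + (i + 1) + 2) = 2 ^ i := by
    rw [show #S + (i + 1) + 2 = #S + 3 + i by ring, pow_add _ (#S + 3), ← mul_assoc, ← mul_pow]
    norm_num
  have h3 : (1 : ℝ) ≤ 2 ^ i := one_le_pow₀ one_le_two
  rw [sub_mul, sub_mul, one_mul, h1, h2]
  linarith [pow_succ (2 : ℝ) i, pow_succ (2 : ℝ) (i + 1), pow_succ (2 : ℝ) (i + 2)]

lemma exists_blocking_rows_of_not_hasEscapeProperty {S T : Finset V} (hTS : T ⊆ S) {v : V}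
    (hv : v ∉ S) {c : ℕ} {G : SimpleGraph V}
    (hc : {w | w ∉ S ∧ w ≠ v ∧ ∀ u ∈ S, ¬ G.Adj u w}.ncard = c)
    (hG : ¬ HasEscapeProperty G S T v) :
    ∃ U ∈ (univ \ insert v S).powersetCard (#S - #T), ∃ w ∈ univ \ insert v S, w ∉ U ∧
      ∃ C₀ ∈ (univ \ insert v S).powersetCard c,
        ∀ u ∈ (univ \ insert v S) \ insert w (U ∪ C₀),
          IsBlockingRow S T U v w fun x => G.Adj u x := by
  classical
  unfold HasEscapeProperty at hG
  push Not at hG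
  obtain ⟨U, hU, hUcard, w, hwS, hwv, hwU, hnowit⟩ := hG
  have hW : ∀ x, x ∈ univ \ insert v S ↔ x ∉ S ∧ x ≠ v := fun x => by simp; tauto
  set C₀ := {w ∈ univ \ insert v S | ∀ u ∈ S, ¬ G.Adj u w}
  have hC₀ : #C₀ = c := by
    rw [← hc, ← Set.ncard_coe_finset]
    congr 1
    ext x
    simp [C₀, hW, and_assoc]
  refine ⟨U, mem_powersetCard.2 ⟨fun x hx => (hW x).2 (hU x hx), hUcard⟩, w, (hW w).2 ⟨hwS, hwv⟩,
    hwU, C₀, mem_powersetCard.2 ⟨filter_subset _ _, hC₀⟩, fun u hu => ⟨?_, fun hrow => ?_⟩⟩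
  · have hu' := Finset.mem_sdiff.1 hu
    have hdom : ¬ ∀ s ∈ S, ¬ G.Adj s u := fun h =>
      hu'.2 (mem_insert_of_mem (mem_union_right _ (mem_filter.2 ⟨hu'.1, h⟩)))
    push Not at hdom
    obtain ⟨s, hs, hsu⟩ := hdom
    exact ⟨⟨s, by simp [hs]⟩, hs, hsu.symm⟩
  · have hadj : ∀ y (hy : y = v ∨ y = w ∨ y ∈ T ∨ y ∈ U), G.Adj y u ↔ y = v ∨ y = w :=
      fun y hy => (G.adj_comm y u).trans <|
        hrow ⟨y, by simp only [mem_insert, mem_union]; grind⟩ hy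
    obtain ⟨y, hy, hyu⟩ := hnowit u ((hadj v (Or.inl rfl)).2 (Or.inl rfl))
      ((hadj w (Or.inr (Or.inl rfl))).2 (Or.inr rfl)) fun t ht htu =>
        ((hadj t (Or.inr (Or.inr (Or.inl ht)))).1 htu).elim (fun h => hv (h ▸ hTS ht))
          fun h => hwS (h ▸ hTS ht)
    exact ((hadj y (Or.inr (Or.inr (Or.inr hy)))).1 hyu).elim (hU y hy).2 fun h => hwU (h ▸ hy)

lemma card_forall_isBlockingRow_le {S T U C₀ : Finset V} (hTS : T ⊂ S) {v w : V} (hv : v ∉ S)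
    (hU : U ∈ (univ \ insert v S).powersetCard (#S - #T)) (hw : w ∈ univ \ insert v S)
    (hwU : w ∉ U) :
    (Nat.card {G : SimpleGraph V // ∀ u ∈ (univ \ insert v S) \ insert w (U ∪ C₀),
        IsBlockingRow S T U v w fun x => G.Adj u x} : ℝ) ≤
      blockingRatio #S ^ (#(univ \ insert v S) - (#C₀ + #S + 1)) *
        2 ^ (Fintype.card V).choose 2 := by
  obtain ⟨hUW, hUcard⟩ := mem_powersetCard.1 hU
  have hU' : ∀ x ∈ U, x ∉ S ∧ x ≠ v := fun x hx => by
    have := hUW hx; simp only [Finset.mem_sdiff, mem_univ, mem_insert, true_and] at this; tauto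
  have hw' : w ∉ S ∧ w ≠ v := by
    simp only [Finset.mem_sdiff, mem_univ, mem_insert, true_and] at hw; tauto
  have hdisj : Disjoint ((univ \ insert v S) \ insert w (U ∪ C₀)) (insert v (insert w (S ∪ U))) :=
    disjoint_left.2 fun x hx hx' => by
      simp only [Finset.mem_sdiff, mem_univ, mem_insert, mem_union, true_and] at hx hx'; tauto
  obtain ⟨hr, hr1, -⟩ := blockingRatio_bounds (Nat.one_le_of_lt (card_lt_card hTS))
  have hsize : #(univ \ insert v S) - (#C₀ + #S + 1) ≤ #((univ \ insert v S) \ insert w (U ∪ C₀)) :=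
    calc _ ≤ #(univ \ insert v S) - #(insert w (U ∪ C₀)) := by
          have := (card_insert_le w (U ∪ C₀)).trans (Nat.succ_le_succ (card_union_le U C₀))
          omega
      _ ≤ _ := le_card_sdiff _ _
  refine (SimpleGraph.card_forall_rows_le hdisj _ _ fun _ _ =>
    card_isBlockingRow_le hTS hU' hUcard hv hw'.1 hw'.2 hwU).trans ?_
  rw [prod_const]
  exact mul_le_mul_of_nonneg_right (pow_le_pow_of_le_one (by linarith) hr1 hsize) (by positivity)

lemma card_le_of_not_hasEscapeProperty {S T : Finset V} (hTS : T ⊂ S) {v : V} (hv : v ∉ S)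
    (c : ℕ) :
    (Nat.card {G : SimpleGraph V // {w | w ∉ S ∧ w ≠ v ∧ ∀ u ∈ S, ¬ G.Adj u w}.ncard = c ∧
        ¬ HasEscapeProperty G S T v} : ℝ) ≤
      (#(univ \ insert v S) + 1) ^ (#S + 1) * (#(univ \ insert v S)).choose c *
        blockingRatio #S ^ (#(univ \ insert v S) - (c + #S + 1)) *
          2 ^ (Fintype.card V).choose 2 := by
  set W := univ \ insert v S
  set idx := {i ∈ W.powersetCard (#S - #T) ×ˢ W ×ˢ W.powersetCard c | i.2.1 ∉ i.1}
  have hcover := Nat.card_le_sum_of_forall_exists (α := SimpleGraph V) (I := idx)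
    (P := fun G => {w | w ∉ S ∧ w ≠ v ∧ ∀ u ∈ S, ¬ G.Adj u w}.ncard = c ∧
      ¬ HasEscapeProperty G S T v)
    (Q := fun i G => ∀ u ∈ W \ insert i.2.1 (i.1 ∪ i.2.2),
      IsBlockingRow S T i.1 v i.2.1 fun x => G.Adj u x) fun G ⟨hc, hG⟩ => by
    obtain ⟨U, hU, w, hw, hwU, C₀, hC₀, hrows⟩ :=
      exists_blocking_rows_of_not_hasEscapeProperty hTS.subset hv hc hG
    exact ⟨(U, w, C₀), mem_filter.2 ⟨mem_product.2 ⟨hU, mem_product.2 ⟨hw, hC₀⟩⟩, hwU⟩, hrows⟩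
  have hidx : #idx ≤ (#W + 1) ^ (#S + 1) * (#W).choose c := by
    calc #idx ≤ #(W.powersetCard (#S - #T) ×ˢ W ×ˢ W.powersetCard c) := card_filter_le _ _
      _ = (#W).choose (#S - #T) * (#W * (#W).choose c) := by
          simp only [card_product, card_powersetCard]
      _ ≤ (#W + 1) ^ #S * ((#W + 1) * (#W).choose c) := by
          gcongr
          · exact (Nat.choose_le_pow _ _).trans ((Nat.pow_le_pow_left (Nat.le_succ _) _).trans
              (Nat.pow_le_pow_right (Nat.succ_pos _) (by omega)))
          · omega
      _ = _ := by ring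
  have hr := (blockingRatio_bounds (Nat.one_le_of_lt (card_lt_card hTS))).1
  calc _ ≤ ∑ i ∈ idx, (Nat.card {G : SimpleGraph V // ∀ u ∈ W \ insert i.2.1 (i.1 ∪ i.2.2),
          IsBlockingRow S T i.1 v i.2.1 fun x => G.Adj u x} : ℝ) := by exact_mod_cast hcover
    _ ≤ ∑ i ∈ idx, blockingRatio #S ^ (#W - (c + #S + 1)) *
          2 ^ (Fintype.card V).choose 2 := sum_le_sum fun i hi => by
      obtain ⟨hi, hwU⟩ := mem_filter.1 hi
      obtain ⟨hU, hwC₀⟩ := mem_product.1 hi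
      obtain ⟨hw, hC₀⟩ := mem_product.1 hwC₀
      rw [← (mem_powersetCard.1 hC₀).2]
      exact card_forall_isBlockingRow_le hTS hv hU hw hwU
    _ = #idx * (blockingRatio #S ^ (#W - (c + #S + 1)) *
          2 ^ (Fintype.card V).choose 2) := by rw [sum_const, nsmul_eq_mul]
    _ ≤ _ := by
      rw [← mul_assoc]
      gcongr
      exact_mod_cast hidx

end Counting

lemma choose_mul_pow_le_one_add_pow (n c : ℕ) {ρ : ℝ} (hρ : 0 ≤ ρ) :
    n.choose c * ρ ^ c ≤ (1 + ρ) ^ n := by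
  rcases le_or_gt c n with hc | hc
  · rw [add_comm, add_pow]
    calc _ = ρ ^ c * 1 ^ (n - c) * n.choose c := by ring
      _ ≤ _ := single_le_sum (f := fun i => ρ ^ i * 1 ^ (n - i) * n.choose i)
          (fun i _ => by positivity) (mem_range.2 (Nat.lt_succ_of_le hc))
  · rw [Nat.choose_eq_zero_of_lt hc, Nat.cast_zero, zero_mul]
    positivity

lemma choose_mul_pow_le_of_mul_le {n c L : ℕ} {a ρ : ℝ} (ha : 0 < a) (hρ : 0 < ρ)
    (hL : a / ρ ≤ (1 + ρ) ^ L) (hcL : c * L ≤ n) :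
    n.choose c * a ^ c ≤ (1 + ρ) ^ (2 * n) :=
  calc n.choose c * a ^ c = n.choose c * ρ ^ c * (a / ρ) ^ c := by
        rw [mul_assoc, ← mul_pow, mul_div_cancel₀ _ hρ.ne']
    _ ≤ (1 + ρ) ^ n * ((1 + ρ) ^ L) ^ c := by
        gcongr
        exact choose_mul_pow_le_one_add_pow n c hρ.le
    _ ≤ (1 + ρ) ^ n * (1 + ρ) ^ n := by
        rw [← pow_mul, mul_comm L]
        gcongr
        · linarith
    _ = (1 + ρ) ^ (2 * n) := by ring

lemma exists_large_rate (k : ℕ) {δ : ℝ} (hδ0 : 0 < δ) (hδ1 : δ ≤ 1) :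
    ∃ L n₀ : ℕ, ∃ θ : ℝ, 0 < θ ∧ θ < 1 ∧ ∀ n ≥ n₀, ∀ c : ℕ, c * L ≤ n →
      ((n : ℝ) + 1) ^ (k + 1) * n.choose c * 4 ^ (c + k + 1) * (1 - δ) ^ n ≤ θ ^ n := by
  obtain ⟨L, hL⟩ := pow_unbounded_of_one_lt (4 / (δ / 4)) (by linarith : (1 : ℝ) < 1 + δ / 4)
  have hr1 : (1 + δ / 4) ^ 2 * (1 - δ) < 1 := by nlinarith [mul_pos hδ0 hδ0, pow_pos hδ0 3]
  set r := (1 + δ / 4) ^ 2 * (1 - δ) with hr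
  have hr0 : 0 ≤ r := by positivity
  set θ := (1 + r) / 2 with hθ
  have hθ0 : 0 < θ := by positivity
  have hs1 : r / θ < 1 := (div_lt_one hθ0).2 (by linarith)
  have hlim := (tendsto_pow_const_mul_const_pow_of_abs_lt_one (k + 1)
    (abs_lt.2 ⟨by linarith [div_nonneg hr0 hθ0.le], hs1⟩)).const_mul (4 ^ (k + 1) * 2 ^ (k + 1))
  rw [mul_zero] at hlim
  obtain ⟨n₀, hn₀⟩ := eventually_atTop.1 (hlim.eventually (gt_mem_nhds one_pos))
  refine ⟨L, max n₀ 1, θ, hθ0, by linarith, fun n hn c hcL => ?_⟩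
  have hn1 : (1 : ℝ) ≤ n := by exact_mod_cast (le_max_right _ _).trans hn
  calc ((n : ℝ) + 1) ^ (k + 1) * n.choose c * 4 ^ (c + k + 1) * (1 - δ) ^ n
      = 4 ^ (k + 1) * ((n : ℝ) + 1) ^ (k + 1) * (n.choose c * 4 ^ c) * (1 - δ) ^ n := by ring
    _ ≤ 4 ^ (k + 1) * (2 * n) ^ (k + 1) * (1 + δ / 4) ^ (2 * n) * (1 - δ) ^ n := by
        gcongr
        · linarith
        · exact choose_mul_pow_le_of_mul_le four_pos (by positivity) hL.le hcL
    _ = 4 ^ (k + 1) * 2 ^ (k + 1) * ((n : ℝ) ^ (k + 1) * (r / θ) ^ n) * θ ^ n := by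
        rw [div_pow, mul_pow, pow_mul, hr, mul_pow]
        field_simp
    _ ≤ θ ^ n := by
        have := hn₀ n ((le_max_left _ _).trans hn)
        nlinarith [pow_pos hθ0 n]

lemma exists_rates (k : ℕ) {δ : ℝ} (hδ0 : 0 < δ) (hδ1 : δ ≤ 1) :
    ∃ ξ θ : ℝ, 0 < ξ ∧ ξ ≤ 1 / 2 ∧ 0 < θ ∧ θ < 1 ∧ ∀ n c : ℕ, (c : ℝ) ≤ ξ * n →
      (c = 0 ∧ 1 / 2 ≤ θ ^ n) ∨
        ((n : ℝ) + 1) ^ (k + 1) * n.choose c * 4 ^ (c + k + 1) * (1 - δ) ^ n ≤ θ ^ n := by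
  obtain ⟨L, n₀, θ₀, hθ₀, hθ₀1, hrate⟩ := exists_large_rate k hδ0 hδ1
  have hN : (1 : ℝ) ≤ (L + 1) * (n₀ + 1) := by nlinarith
  have hθ : (0 : ℝ) < 1 - 1 / (2 * (n₀ + 1)) := by
    rw [sub_pos, div_lt_one (by positivity)]; linarith
  refine ⟨1 / (2 * ((L + 1) * (n₀ + 1))), max θ₀ (1 - 1 / (2 * (n₀ + 1))), by positivity,
    ?_, lt_max_of_lt_left hθ₀, max_lt hθ₀1 (by simp; positivity), fun n c hc => ?_⟩
  · rw [div_le_div_iff₀ (by positivity) two_pos]; linarith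
  rw [one_div_mul_eq_div, le_div_iff₀ (by positivity)] at hc
  rcases le_or_gt n₀ n with hn | hn
  · refine .inr ((hrate n hn c ?_).trans (pow_le_pow_left₀ hθ₀.le (le_max_left _ _) n))
    have : (c : ℝ) * L ≤ n := by nlinarith [(c.cast_nonneg : (0 : ℝ) ≤ c)]
    exact_mod_cast this
  · have hn' : (n : ℝ) ≤ n₀ := by exact_mod_cast hn.le
    refine .inl ⟨?_, ?_⟩
    · have : (c : ℝ) < 1 := by nlinarith
      exact_mod_cast Nat.lt_one_iff.1 (by exact_mod_cast this)
    · refine le_trans ?_ (pow_le_pow_left₀ hθ.le (le_max_right _ _) n)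
      have hx : 1 / (2 * ((n₀ : ℝ) + 1)) ≤ 1 / 2 := by gcongr; linarith
      have hnx : (n : ℝ) * (1 / (2 * ((n₀ : ℝ) + 1))) ≤ 1 / 2 := by
        rw [mul_one_div, div_le_iff₀ (by positivity)]; linarith
      have hb := one_add_mul_le_pow (a := -(1 / (2 * ((n₀ : ℝ) + 1)))) (by linarith) n
      rw [← sub_eq_add_neg] at hb
      linarith

lemma pow_sub_le_four_pow_mul {r : ℝ} (h0 : 1 / 4 ≤ r) (h1 : r ≤ 1) (n m : ℕ) :
    r ^ (n - m) ≤ 4 ^ m * r ^ n := by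
  have hr : r ^ (n - m) * r ^ m ≤ r ^ n := by
    rw [← pow_add]; exact pow_le_pow_of_le_one (by linarith) h1 (by omega)
  have hm : (1 / 4) ^ m ≤ r ^ m := pow_le_pow_left₀ (by norm_num) h0 m
  calc r ^ (n - m) = 4 ^ m * (r ^ (n - m) * (1 / 4) ^ m) := by
        rw [mul_left_comm, ← mul_pow]; norm_num
    _ ≤ 4 ^ m * r ^ n := by gcongr; exact (mul_le_mul_of_nonneg_left hm (by positivity)).trans hr

lemma two_rpow_logb_sub_neg_logb_mul {k : ℕ} (hk : 1 ≤ k) {θ : ℝ} (hθ : 0 < θ) (n : ℕ) :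
    (2 : ℝ) ^ ((Real.logb 2 (1 - 2 ^ (-(k : ℝ))) - -Real.logb 2 θ) * n) =
      ((1 - (1 / 2) ^ k) * θ) ^ n := by
  have hp : 0 < 1 - (1 / 2 : ℝ) ^ k :=
    sub_pos.2 (pow_lt_one₀ (by norm_num) (by norm_num) (by omega))
  rw [Real.rpow_neg zero_le_two, Real.rpow_natCast, ← inv_pow, ← one_div, sub_neg_eq_add,
    ← Real.logb_mul hp.ne' hθ.ne', Real.rpow_mul zero_le_two,
    Real.rpow_logb zero_lt_two (by norm_num) (mul_pos hp hθ), Real.rpow_natCast]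

lemma mul_blockingRatio_pow_le {k n c : ℕ} (hk : 1 ≤ k) {θ : ℝ}
    (h : ((n : ℝ) + 1) ^ (k + 1) * n.choose c * 4 ^ (c + k + 1) * (1 - (1 / 2) ^ (k + 3)) ^ n ≤
      θ ^ n) :
    ((n : ℝ) + 1) ^ (k + 1) * n.choose c * blockingRatio k ^ (n - (c + k + 1)) ≤
      ((1 - (1 / 2) ^ k) * θ) ^ n := by
  obtain ⟨hr, hr1, hrp⟩ := blockingRatio_bounds hk
  have hp : 0 ≤ 1 - (1 / 2 : ℝ) ^ k := sub_nonneg.2 (pow_le_one₀ (by norm_num) (by norm_num))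
  calc _ ≤ ((n : ℝ) + 1) ^ (k + 1) * n.choose c *
        (4 ^ (c + k + 1) * ((1 - (1 / 2) ^ k) * (1 - (1 / 2) ^ (k + 3))) ^ n) := by
        gcongr
        exact (pow_sub_le_four_pow_mul hr hr1 _ _).trans (by gcongr)
    _ = (1 - (1 / 2) ^ k) ^ n * (((n : ℝ) + 1) ^ (k + 1) * n.choose c * 4 ^ (c + k + 1) *
        (1 - (1 / 2) ^ (k + 3)) ^ n) := by rw [mul_pow]; ring
    _ ≤ _ := by
        rw [mul_pow]
        exact mul_le_mul_of_nonneg_left h (pow_nonneg hp n)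

theorem key_lemma_nbr_general (k : ℕ) :
    ∃ ξ ε : ℝ, 0 < ξ ∧ ξ ≤ 1 / 2 ∧ 0 < ε ∧
      ∀ n : ℕ, 1 ≤ n →
      ∀ S : Finset (Fin (n + k + 1)), S.card = k →
      ∀ v : Fin (n + k + 1), v ∉ S →
      ∀ T : Finset (Fin (n + k + 1)), T ⊂ S →
      ∀ a b c : ℕ, a ≤ b → b ≤ n → (c : ℝ) ≤ ξ * n →
        (Nat.card {G : SimpleGraph (Fin (n + k + 1)) //
            -- (p1) `v` has no neighbour in `S`
            (∀ u ∈ S, ¬ G.Adj v u) ∧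
            -- (p2) exactly `b` vertices of `W = V \ (S ∪ {v})` are adjacent to `v`
            {w | w ∉ S ∧ w ≠ v ∧ G.Adj v w}.ncard = b ∧
            -- (p3) exactly `c` vertices of `W` have no neighbour in `S`
            {w | w ∉ S ∧ w ≠ v ∧ ∀ u ∈ S, ¬ G.Adj u w}.ncard = c ∧
            -- (p4) exactly `a` vertices of `N(v)` are dominated by `S` and nonadjacent to `T`
            {u | G.Adj v u ∧ (∃ s ∈ S, G.Adj s u) ∧ ∀ t ∈ T, ¬ G.Adj t u}.ncard = a ∧
            -- (p5) the escape property fails for some `U ⊆ W` with `|U| = k - ℓ` and `w ∈ W \ U`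
            ¬ (∀ U : Finset (Fin (n + k + 1)), (∀ x ∈ U, x ∉ S ∧ x ≠ v) →
                U.card = k - T.card →
                ∀ w : Fin (n + k + 1), w ∉ S → w ≠ v → w ∉ U →
                ∃ w', G.Adj v w' ∧ G.Adj w w' ∧ (∀ t ∈ T, ¬ G.Adj t w') ∧
                  ∀ u ∈ U, ¬ G.Adj u w')} : ℝ) ≤
          2 ^ ((Real.logb 2 (1 - 2 ^ (-(k : ℝ))) - ε) * n) *
            2 ^ ((n + k + 1) * (n + k) / 2) := by
  obtain ⟨ξ, θ, hξ0, hξ, hθ0, hθ1, hrates⟩ :=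
    exists_rates k (pow_pos one_half_pos (k + 3)) (pow_le_one₀ (by norm_num) (by norm_num))
  refine ⟨ξ, -Real.logb 2 θ, hξ0, hξ, neg_pos.2 (Real.logb_neg one_lt_two hθ0 hθ1), ?_⟩
  intro n _ S hS v hv T hTS a b c _ _ hc
  have hk : 1 ≤ k := hS ▸ Nat.one_le_of_lt (card_lt_card hTS)
  have hW : #(univ \ insert v S) = n := by
    rw [card_sdiff_of_subset (subset_univ _), card_univ, Fintype.card_fin,
      card_insert_of_notMem hv, hS]
    omega
  rw [two_rpow_logb_sub_neg_logb_mul hk hθ0, show (n + k + 1) * (n + k) / 2 =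
    (Fintype.card (Fin (n + k + 1))).choose 2 by
      rw [Fintype.card_fin, Nat.choose_two_right, Nat.add_sub_cancel]]
  rcases hrates n c hc with ⟨rfl, hθn⟩ | hlarge
  · refine le_trans ?_ ((card_le_of_undominated_eq_zero S hv).trans ?_)
    · exact Nat.cast_le.2 (Nat.card_mono (Set.toFinite _) fun G hG => ⟨hG.1, hG.2.2.1⟩)
    have hp : 0 ≤ 1 - (1 / 2 : ℝ) ^ k := sub_nonneg.2 (pow_le_one₀ (by norm_num) (by norm_num))
    have hsmall : (1 / 2 : ℝ) ^ k ≤ θ ^ n :=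
      (pow_le_pow_of_le_one (by norm_num) (by norm_num) hk).trans (by simpa using hθn)
    rw [hS, hW, mul_pow, mul_comm ((1 / 2 : ℝ) ^ k)]
    gcongr ?_ * _
    exact mul_le_mul_of_nonneg_left hsmall (pow_nonneg hp n)
  · refine le_trans ?_ ((card_le_of_not_hasEscapeProperty hTS hv c).trans ?_)
    · exact Nat.cast_le.2 (Nat.card_mono (Set.toFinite _) fun G hG =>
        ⟨hG.2.2.1, by simpa only [HasEscapeProperty, hS] using hG.2.2.2.2⟩)
    rw [hS, hW]
    gcongr ?_ * _
    exact mul_blockingRatio_pow_le hk hlarge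

/-- Key lemma, `N(v)` version: there exist `ξ ∈ (0,1/2]` and `ε > 0` such that for every
`n ≥ 1`, every `S` of cardinality `k`, every `v ∉ S`, every `T ⊊ S`, and all `a ≤ b ≤ n`,
`c ≤ ξn`, the number of labelled graphs on `{1,…,n+k+1}` satisfying (p1)–(p5) simultaneously
is at most `2^{(log₂(1-2^{-k}) - ε) n} · 2^{(n+k+1)(n+k)/2}`. -/
theorem key_lemma_nbr (k : ℕ) (hk : 1 ≤ k) :
    ∃ ξ ε : ℝ, 0 < ξ ∧ ξ ≤ 1 / 2 ∧ 0 < ε ∧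
      ∀ n : ℕ, 1 ≤ n →
      ∀ S : Finset (Fin (n + k + 1)), S.card = k →
      ∀ v : Fin (n + k + 1), v ∉ S →
      ∀ T : Finset (Fin (n + k + 1)), T ⊂ S →
      ∀ a b c : ℕ, a ≤ b → b ≤ n → (c : ℝ) ≤ ξ * n →
        (Nat.card {G : SimpleGraph (Fin (n + k + 1)) //
            -- (p1) `v` has no neighbour in `S`
            (∀ u ∈ S, ¬ G.Adj v u) ∧
            -- (p2) exactly `b` vertices of `W = V \ (S ∪ {v})` are adjacent to `v`
            {w | w ∉ S ∧ w ≠ v ∧ G.Adj v w}.ncard = b ∧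
            -- (p3) exactly `c` vertices of `W` have no neighbour in `S`
            {w | w ∉ S ∧ w ≠ v ∧ ∀ u ∈ S, ¬ G.Adj u w}.ncard = c ∧
            -- (p4) exactly `a` vertices of `N(v)` are dominated by `S` and nonadjacent to `T`
            {u | G.Adj v u ∧ (∃ s ∈ S, G.Adj s u) ∧ ∀ t ∈ T, ¬ G.Adj t u}.ncard = a ∧
            -- (p5) the escape property fails for some `U ⊆ W` with `|U| = k - ℓ` and `w ∈ W \ U`
            ¬ (∀ U : Finset (Fin (n + k + 1)), (∀ x ∈ U, x ∉ S ∧ x ≠ v) →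
                U.card = k - T.card →
                ∀ w : Fin (n + k + 1), w ∉ S → w ≠ v → w ∉ U →
                ∃ w', G.Adj v w' ∧ G.Adj w w' ∧ (∀ t ∈ T, ¬ G.Adj t w') ∧
                  ∀ u ∈ U, ¬ G.Adj u w')} : ℝ) ≤
          2 ^ ((Real.logb 2 (1 - 2 ^ (-(k : ℝ))) - ε) * n) *
            2 ^ ((n + k + 1) * (n + k) / 2) :=
  key_lemma_nbr_general k
end

section
/- Let k ≥ 1 and q ≥ 1 be integers and let G be a finite simple graph with δ_k(G) ≥ q. If fewer than q vertices of G are (k,q)-dangerous, then G is not k-cop-win (i.e., the robber has a strategy to evade k cops forever). -/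
open Filter Topology

/-!
The robber keeps the invariant that his vertex is not dangerous and lies in `N^c` of the cops'
vertices, so that no cop can catch him in one move. When the cops move to `c'`, fill the cops'
vertices up to a `k`-set `A` avoiding the robber's vertex `r`; as `r` is not dangerous,
`N^c(A) ∩ N(r)` has more than `2q` vertices, fewer than `q` of which are dangerous, so the robber
can step to a safe one. The start is similar, with `δ_k(G) ≥ q` guaranteeing `|N^c(A)| ≥ q`.
-/

/-- The set `N^c(A)` of the paper. -/
def commonNonNbrs {V : Type*} (G : SimpleGraph V) (A : Set V) : Set V :=
  {w | ∀ u ∈ A, w ≠ u ∧ ¬ G.Adj u w}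

namespace commonNonNbrs

variable {V : Type*} {G : SimpleGraph V} {A B : Set V} {w : V}

theorem notMem_of_mem (hw : w ∈ commonNonNbrs G A) : w ∉ A :=
  fun hwA => (hw w hwA).1 rfl

theorem anti (hAB : A ⊆ B) : commonNonNbrs G B ⊆ commonNonNbrs G A :=
  fun _ hw u hu => hw u (hAB hu)

theorem notMem_range_of_move {k : ℕ} {c c' : Fin k → V} {r : V}
    (hr : r ∈ commonNonNbrs G (Set.range c))
    (hmove : ∀ i, c' i = c i ∨ G.Adj (c i) (c' i)) : r ∉ Set.range c' := by
  rintro ⟨i, rfl⟩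
  obtain ⟨hne, hnadj⟩ := hr (c i) ⟨i, rfl⟩
  rcases hmove i with hstay | hadj
  · exact hne hstay
  · exact hnadj hadj

end commonNonNbrs

theorem Finset.exists_superset_card_eq_notMem {V : Type*} [Fintype V] [DecidableEq V]
    {B : Finset V} {k : ℕ} (hB : B.card ≤ k) (hk : k < Fintype.card V) {r : V} (hr : r ∉ B) :
    ∃ A : Finset V, B ⊆ A ∧ A.card = k ∧ r ∉ A := by
  have hBr : B ⊆ Finset.univ.erase r := fun x hx =>
    Finset.mem_erase.mpr ⟨fun hxr => hr (hxr ▸ hx), Finset.mem_univ x⟩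
  obtain ⟨A, hBA, hAr, hA⟩ := Finset.exists_subsuperset_card_eq hBr hB
    (by rw [Finset.card_erase_of_mem (Finset.mem_univ r), Finset.card_univ]; omega)
  exact ⟨A, hBA, hA, fun hrA => Finset.notMem_erase r _ (hAr hrA)⟩

section

variable {V : Type*} [Fintype V] (G : SimpleGraph V) {k q : ℕ}

theorem exists_card_eq_range_subset_notMem (hk : k < Fintype.card V) (c : Fin k → V) {r : V}
    (hr : r ∉ Set.range c) : ∃ A : Finset V, Set.range c ⊆ A ∧ A.card = k ∧ r ∉ A := by
  classical
  have hcard : (Finset.univ.image c).card ≤ k := Finset.card_image_le.trans (by simp)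
  rw [← Fintype.coe_image_univ] at hr ⊢
  simpa only [Finset.coe_subset] using Finset.exists_superset_card_eq_notMem hcard hk hr

theorem deltaK_le_ncard_commonNonNbrs {A : Finset V} (hA : A.card = k) :
    deltaK G k ≤ (commonNonNbrs G A).ncard :=
  Nat.sInf_le ⟨A, hA, rfl⟩

theorem lt_card_of_pos_deltaK (h : 0 < deltaK G k) : k < Fintype.card V := by
  classical
  obtain ⟨_, S, hS, rfl⟩ := Nat.nonempty_of_pos_sInf h
  obtain ⟨w, hw⟩ := Set.nonempty_of_ncard_ne_zero
    (h.trans_le (deltaK_le_ncard_commonNonNbrs G hS)).ne'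
  calc k < (insert w S).card := by
        rw [Finset.card_insert_of_notMem (commonNonNbrs.notMem_of_mem hw), hS]; omega
    _ ≤ Fintype.card V := Finset.card_le_univ _

theorem exists_not_dangerous_mem (hdanger : {b | Dangerous G k q b}.ncard < q) {T : Set V}
    (hT : q ≤ T.ncard) : ∃ r ∈ T, ¬ Dangerous G k q r :=
  Set.exists_mem_notMem_of_ncard_lt_ncard (hdanger.trans_le hT)

theorem exists_safe_start (hδ : q ≤ deltaK G k) (hdanger : {b | Dangerous G k q b}.ncard < q)
    (hk : k < Fintype.card V) (c : Fin k → V) :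
    ∃ r, ¬ Dangerous G k q r ∧ r ∈ commonNonNbrs G (Set.range c) := by
  obtain ⟨v, hv⟩ : ∃ v, v ∉ Set.range c := by
    by_contra! hsurj
    have := Fintype.card_le_of_surjective c hsurj
    rw [Fintype.card_fin] at this
    omega
  obtain ⟨A, hcA, hA, -⟩ := exists_card_eq_range_subset_notMem hk c hv
  obtain ⟨r, hrA, hr⟩ := exists_not_dangerous_mem G hdanger
    (hδ.trans (deltaK_le_ncard_commonNonNbrs G hA))
  exact ⟨r, hr, commonNonNbrs.anti hcA hrA⟩

theorem exists_safe_move (hdanger : {b | Dangerous G k q b}.ncard < q)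
    (hk : k < Fintype.card V) (c : Fin k → V) {r : V} (hrc : r ∉ Set.range c)
    (hr : ¬ Dangerous G k q r) :
    ∃ r', G.Adj r r' ∧ ¬ Dangerous G k q r' ∧ r' ∈ commonNonNbrs G (Set.range c) := by
  obtain ⟨A, hcA, hA, hrA⟩ := exists_card_eq_range_subset_notMem hk c hrc
  have hmany : 2 * q < (commonNonNbrs G A ∩ G.neighborSet r).ncard :=
    lt_of_not_ge fun hle => hr ⟨A, hA, hrA, hle⟩
  obtain ⟨r', ⟨hr'A, hrr'⟩, hr'⟩ := exists_not_dangerous_mem G hdanger (T := _ ∩ _)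
    (by omega : q ≤ (commonNonNbrs G A ∩ G.neighborSet r).ncard)
  exact ⟨r', hrr', hr', commonNonNbrs.anti hcA hr'A⟩

theorem not_copsWinPos_of_safe (hdanger : {b | Dangerous G k q b}.ncard < q)
    (hk : k < Fintype.card V) {c : Fin k → V} {r : V} (hr : ¬ Dangerous G k q r)
    (hrc : r ∈ commonNonNbrs G (Set.range c)) : ¬ CopsWinPos G c r := by
  intro hwin
  induction hwin with
  | capture c r c' hmove hcap =>
    exact commonNonNbrs.notMem_range_of_move hrc hmove hcap
  | advance c r c' hmove _ ih =>
    obtain ⟨r', hrr', hr', hr'c'⟩ := exists_safe_move G hdanger hk c'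
      (commonNonNbrs.notMem_range_of_move hrc hmove) hr
    exact ih r' (Or.inr hrr') hr' hr'c'

end

theorem not_kCopWin_of_few_dangerous_general {V : Type*} [Fintype V] (G : SimpleGraph V)
    (k q : ℕ) (hq : 1 ≤ q) (hδ : q ≤ deltaK G k)
    (hdanger : {b : V | Dangerous G k q b}.ncard < q) :
    ¬ IsKCopWin G k := by
  have hk : k < Fintype.card V := lt_card_of_pos_deltaK G (hq.trans hδ)
  rintro ⟨c, hc⟩
  obtain ⟨r, hr, hrc⟩ := exists_safe_start G hδ hdanger hk c
  rcases hc r with hcap | hwin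
  · exact commonNonNbrs.notMem_of_mem hrc hcap
  · exact not_copsWinPos_of_safe G hdanger hk hr hrc hwin

/-- If `δ_k(G) ≥ q` and fewer than `q` vertices of `G` are `(k,q)`-dangerous, then the robber
can evade `k` cops forever, i.e. `G` is not `k`-cop-win. -/
theorem not_kCopWin_of_few_dangerous {V : Type*} [Fintype V] (G : SimpleGraph V)
    (k q : ℕ) (hk : 1 ≤ k) (hq : 1 ≤ q) (hδ : q ≤ deltaK G k)
    (hdanger : {b : V | Dangerous G k q b}.ncard < q) :
    ¬ IsKCopWin G k :=
  not_kCopWin_of_few_dangerous_general G k q hq hδ hdanger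
end
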